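/- arXiv:2206.10278 — 8 statements merged into one kernel-verified Lean document; each statement's English description precedes it below -/
import Mathlib

section
/- Let T_{n-1} be the (n−1)×(n−1) tridiagonal matrix with all diagonal, superdiagonal, and subdiagonal entries equal to −2, and let B_n be the n×n matrix in block form [[0, e'],[e, T_{n-1}]], where e is the all-ones column vector. Then det(B_n) = 0 if n ≡ 0 (mod 3), det(B_n) = 2^{n-2}·(n−1)/3 if n ≡ 1 (mod 3), and det(B_n) = −2^{n-2}·(n+1)/3 if n ≡ 2 (mod 3). -/
open Matrix

noncomputable section

/-- Tridiagonal matrix of order `m` with `a` on the diagonal, `b` on the superdiagonal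
and `c` on the subdiagonal. -/
def tridiag {R : Type*} [Zero R] (m : ℕ) (a b c : R) : Matrix (Fin m) (Fin m) R :=
  Matrix.of fun i j =>
    if (i : ℕ) = (j : ℕ) then a
    else if (j : ℕ) = (i : ℕ) + 1 then b
    else if (i : ℕ) = (j : ℕ) + 1 then c
    else 0

/-- The bordered matrix `[[0, e'],[e, A]]` where `e` is the all-ones vector. -/
def border {R : Type*} [Zero R] [One R] {m : ℕ} (A : Matrix (Fin m) (Fin m) R) :
    Matrix (Fin (m + 1)) (Fin (m + 1)) R :=
  Matrix.of fun i j =>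
    if hi : i = 0 then (if j = 0 then 0 else 1)
    else if hj : j = 0 then 1
    else A (i.pred hi) (j.pred hj)

/-- The circulant matrix whose first row is `c`, each subsequent row the cyclic
right shift of the previous one. -/
def circ {R : Type*} {m : ℕ} (c : Fin m → R) : Matrix (Fin m) (Fin m) R :=
  Matrix.of fun i j => c (j - i)

/-- The eccentricity matrix of the wheel graph `W_n` (hub is vertex `0`, cycle vertices
`1, …, n-1`): `E(W_n) = [[0, e'],[e, circ(0,0,2,…,2,0)]]`. -/
def EW (n : ℕ) : Matrix (Fin n) (Fin n) ℝ :=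
  Matrix.of fun i j =>
    if i = j then 0
    else if (i : ℕ) = 0 ∨ (j : ℕ) = 0 then 1
    else if ((j : ℕ) : ZMod (n - 1)) - ((i : ℕ) : ZMod (n - 1)) = 1
            ∨ ((i : ℕ) : ZMod (n - 1)) - ((j : ℕ) : ZMod (n - 1)) = 1 then 0
    else 2


/-! With `T = tridiag m (-2) (-2) (-2)`, the vector `x` equal to `-1/2` on one residue class
mod 3 and `0` elsewhere solves `T x = e`, provided the class avoids the two indices `-1` and `m`
just outside the matrix; one of the classes `0`, `1` always does. Replacing the first column of
the bordered matrix `B` by `B (-1, x) = (∑ x, 0, …, 0)` shows `det B = -(∑ x) det T`.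
Finally the recurrence `D (m + 2) = -2 D (m + 1) - 4 D m` for `D m = det T` gives
`D (m + 3) = 8 D m`, so `D` runs through `8 ^ k, -2 * 8 ^ k, 0`. -/

section Border

variable {R : Type*} {m : ℕ}

@[simp] lemma border_zero_zero [Zero R] [One R] (A : Matrix (Fin m) (Fin m) R) :
    border A 0 0 = 0 := by simp [border]

@[simp] lemma border_zero_succ [Zero R] [One R] (A : Matrix (Fin m) (Fin m) R) (j : Fin m) :
    border A 0 j.succ = 1 := by simp [border]

@[simp] lemma border_succ_zero [Zero R] [One R] (A : Matrix (Fin m) (Fin m) R) (i : Fin m) :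
    border A i.succ 0 = 1 := by simp [border]

@[simp] lemma border_succ_succ [Zero R] [One R] (A : Matrix (Fin m) (Fin m) R) (i j : Fin m) :
    border A i.succ j.succ = A i j := by simp [border]

lemma det_border_of_mulVec_eq_one [CommRing R] (A : Matrix (Fin m) (Fin m) R) (x : Fin m → R)
    (hx : A *ᵥ x = 1) : (border A).det = -(∑ i, x i) * A.det := by
  set u : Fin (m + 1) → R := Fin.cons (-1) x
  have hu : border A *ᵥ u = Pi.single 0 (∑ i, x i) := by
    ext i
    induction i using Fin.cases with
    | zero => simp [mulVec, dotProduct, Fin.sum_univ_succ, u]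
    | succ i =>
      have hxi := congrFun hx i
      simp only [mulVec, dotProduct] at hxi
      simp [mulVec, dotProduct, Fin.sum_univ_succ, u, hxi]
  have hminor :
      ((border A).updateCol 0 (Pi.single 0 (∑ i, x i))).submatrix Fin.succ Fin.succ = A := by
    ext i j
    simp
  have hcol : ((border A).updateCol 0 (Pi.single 0 (∑ i, x i))).det = (∑ i, x i) * A.det := by
    rw [det_succ_column_zero, Fin.sum_univ_succ]
    simp [hminor]
  calc (border A).det = -(u 0 • (border A).det) := by simp [u]
    _ = -((border A).updateCol 0 (border A *ᵥ u)).det := by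
      rw [← det_updateCol_sum]
      simp_rw [smul_eq_mul, mul_comm (u _)]
      rfl
    _ = -(∑ i, x i) * A.det := by rw [hu, hcol, neg_mul]

end Border

section Tridiag

variable {R : Type*}

lemma tridiag_submatrix_succ [Zero R] (m : ℕ) (a b c : R) :
    (tridiag (m + 1) a b c).submatrix Fin.succ Fin.succ = tridiag m a b c := by
  ext i j
  simp only [tridiag, submatrix_apply, of_apply, Fin.val_succ]
  split_ifs <;> first | rfl | omega

lemma det_tridiag_one [CommRing R] (a b c : R) : (tridiag 1 a b c).det = a := by
  simp [tridiag]

lemma det_tridiag_succ_succ [CommRing R] (m : ℕ) (a b c : R) :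
    (tridiag (m + 2) a b c).det =
      a * (tridiag (m + 1) a b c).det - b * c * (tridiag m a b c).det := by
  set T := tridiag (m + 2) a b c
  have hss (j : Fin m) : (Fin.succ 0 : Fin (m + 2)).succAbove j.succ = j.succ.succ :=
    Fin.succAbove_of_le_castSucc _ _ (by simp [Fin.le_def])
  have hM : (T.submatrix Fin.succ (Fin.succ 0).succAbove).det = c * (tridiag m a b c).det := by
    rw [det_succ_column_zero, Fin.sum_univ_succ]
    have hminor : (T.submatrix Fin.succ (Fin.succ 0).succAbove).submatrix (Fin.succAbove 0)
        Fin.succ = tridiag m a b c := by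
      ext i j
      simp only [T, tridiag, submatrix_apply, of_apply, Fin.succAbove_zero, hss, Fin.val_succ]
      split_ifs <;> first | rfl | omega
    rw [hminor]
    simp [T, tridiag]
  have h00 : T 0 0 = a := by simp [T, tridiag]
  have h01 : T 0 (Fin.succ 0) = b := by simp [T, tridiag]
  have hrow (j : Fin m) : T 0 j.succ.succ = 0 := by simp [T, tridiag]
  rw [det_succ_row_zero, Fin.sum_univ_succ, Fin.sum_univ_succ, hM, Fin.succAbove_zero,
    tridiag_submatrix_succ, h00, h01, Finset.sum_eq_zero fun j _ => by rw [hrow, mul_zero, zero_mul]]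
  simp only [Fin.val_zero, Fin.val_succ, zero_add, pow_zero, pow_one]
  ring

lemma Fin.sum_univ_ite_val_eq [AddCommMonoid R] (m t : ℕ) (x : R) :
    ∑ j : Fin m, (if (j : ℕ) = t then x else 0) = if t < m then x else 0 := by
  rw [Fin.sum_univ_eq_sum_range (fun j => if j = t then x else 0), Finset.sum_ite_eq']
  simp

lemma tridiag_mulVec_apply [CommRing R] {m : ℕ} (a b c : R) (w : ℤ → R)
    (hlow : w (-1) = 0) (hhigh : w m = 0) (i : Fin m) :
    (tridiag m a b c *ᵥ fun j => w j) i =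
      c * w ((i : ℤ) - 1) + a * w i + b * w ((i : ℤ) + 1) := by
  have hsplit (j : Fin m) : tridiag m a b c i j * w j =
      (if (j : ℕ) = i - 1 then c * w ((i : ℤ) - 1) else 0) +
        (if (j : ℕ) = i then a * w i else 0) +
        (if (j : ℕ) = i + 1 then b * w ((i : ℤ) + 1) else 0) := by
    simp only [tridiag, of_apply]
    split_ifs <;> first
      | (exfalso; omega)
      | (simp only [add_zero, zero_add, zero_mul]; congr 2; omega)
      | (rw [show (i : ℤ) - 1 = -1 by omega, hlow, show (j : ℤ) = i by omega]; ring)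
      | simp
  have hi := i.isLt
  simp only [mulVec, dotProduct, hsplit, Finset.sum_add_distrib, Fin.sum_univ_ite_val_eq]
  rw [if_pos (by omega), if_pos hi]
  split_ifs
  · rfl
  · rw [show (i : ℤ) + 1 = m by omega, hhigh]
    simp

lemma det_tridiag_neg_two_add_three [CommRing R] (m : ℕ) :
    (tridiag (m + 3) (-2 : R) (-2) (-2)).det = 8 * (tridiag m (-2 : R) (-2) (-2)).det := by
  rw [det_tridiag_succ_succ, det_tridiag_succ_succ]
  ring

lemma det_tridiag_neg_two_three_mul_add [CommRing R] (k i : ℕ) :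
    (tridiag (3 * k + i) (-2 : R) (-2) (-2)).det =
      8 ^ k * (tridiag i (-2 : R) (-2) (-2)).det := by
  induction k with
  | zero => rw [mul_zero, zero_add, pow_zero, one_mul]
  | succ k ih =>
    rw [show 3 * (k + 1) + i = 3 * k + i + 3 by ring, det_tridiag_neg_two_add_three, ih]
    ring

lemma det_tridiag_neg_two_mod_three [CommRing R] (k : ℕ) :
    (tridiag (3 * k) (-2 : R) (-2) (-2)).det = 8 ^ k ∧
      (tridiag (3 * k + 1) (-2 : R) (-2) (-2)).det = -2 * 8 ^ k ∧
      (tridiag (3 * k + 2) (-2 : R) (-2) (-2)).det = 0 := by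
  refine ⟨by simpa using det_tridiag_neg_two_three_mul_add (R := R) k 0, ?_, ?_⟩
  · rw [det_tridiag_neg_two_three_mul_add, det_tridiag_one]
    ring
  · rw [det_tridiag_neg_two_three_mul_add, det_tridiag_succ_succ, det_tridiag_one, det_fin_zero]
    ring

end Tridiag

def negHalfIndicatorMod3 (r j : ℤ) : ℝ := if j % 3 = r then -1 / 2 else 0

lemma tridiag_neg_two_mulVec_negHalfIndicatorMod3 {m : ℕ} {r : ℤ} (hr : r = 0 ∨ r = 1)
    (hm : (m : ℤ) % 3 ≠ r) :
    (tridiag m (-2 : ℝ) (-2) (-2) *ᵥ fun j => negHalfIndicatorMod3 r j) = 1 := by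
  ext i
  rw [tridiag_mulVec_apply _ _ _ _ (by rw [negHalfIndicatorMod3, if_neg (by omega)])
    (by rw [negHalfIndicatorMod3, if_neg hm])]
  simp only [negHalfIndicatorMod3, Pi.one_apply]
  split_ifs <;> first | (exfalso; omega) | norm_num

lemma sum_negHalfIndicatorMod3 (m : ℕ) {r : ℤ} (hr : 0 ≤ r ∧ r < 3) :
    ∑ j : Fin m, negHalfIndicatorMod3 r j = -(((m + 2 - r) / 3 : ℤ) : ℝ) / 2 := by
  induction m with
  | zero => simp [show (2 - r) / 3 = 0 by omega]
  | succ m ih =>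
    rw [Fin.sum_univ_castSucc]
    simp only [Fin.val_castSucc, ih, Fin.val_last]
    unfold negHalfIndicatorMod3
    split_ifs
    · rw [show ((m + 1 : ℕ) + 2 - r) / 3 = (m + 2 - r) / 3 + 1 by omega]
      push_cast
      ring
    · rw [show ((m + 1 : ℕ) + 2 - r) / 3 = (m + 2 - r) / 3 by omega]
      ring

lemma det_border_tridiag_neg_two {m : ℕ} {r : ℤ} (hr : r = 0 ∨ r = 1) (hm : (m : ℤ) % 3 ≠ r) :
    (border (tridiag m (-2 : ℝ) (-2) (-2))).det =
      (((m + 2 - r) / 3 : ℤ) : ℝ) / 2 * (tridiag m (-2 : ℝ) (-2) (-2)).det := by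
  rw [det_border_of_mulVec_eq_one _ _ (tridiag_neg_two_mulVec_negHalfIndicatorMod3 hr hm),
    sum_negHalfIndicatorMod3 m (by omega)]
  ring

theorem stmt2_general (n : ℕ) :
    (border (tridiag (n - 1) (-2 : ℝ) (-2) (-2))).det =
      if n % 3 = 0 then 0
      else if n % 3 = 1 then 2 ^ (n - 2) * ((n : ℝ) - 1) / 3
      else -(2 ^ (n - 2) * ((n : ℝ) + 1) / 3) := by
  rcases n with _ | m
  · simp [border]
  rw [Nat.add_sub_cancel]
  obtain ⟨k, rfl | rfl | rfl⟩ : ∃ k, m = 3 * k ∨ m = 3 * k + 1 ∨ m = 3 * k + 2 :=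
    ⟨m / 3, by omega⟩
  · rw [det_border_tridiag_neg_two (r := 1) (by simp) (by omega),
      (det_tridiag_neg_two_mod_three k).1, if_neg (by omega), if_pos (by omega),
      show ((3 * k : ℕ) + 2 - 1 : ℤ) / 3 = k by omega]
    rcases k with _ | k
    · simp
    · rw [show 3 * (k + 1) + 1 - 2 = 3 * k + 2 by omega, pow_succ 8, pow_add, pow_mul]
      push_cast
      ring
  · rw [det_border_tridiag_neg_two (r := 0) (by simp) (by omega),
      (det_tridiag_neg_two_mod_three k).2.1, if_neg (by omega), if_neg (by omega),
      show ((3 * k + 1 : ℕ) + 2 - 0 : ℤ) / 3 = k + 1 by omega,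
      show 3 * k + 1 + 1 - 2 = 3 * k by omega, pow_mul]
    push_cast
    ring
  · rw [det_border_tridiag_neg_two (r := 0) (by simp) (by omega),
      (det_tridiag_neg_two_mod_three k).2.2, if_pos (by omega), mul_zero]

theorem stmt2 (n : ℕ) (h : 2 ≤ n) :
    (border (tridiag (n - 1) (-2 : ℝ) (-2) (-2))).det =
      if n % 3 = 0 then 0
      else if n % 3 = 1 then 2 ^ (n - 2) * ((n : ℝ) - 1) / 3
      else -(2 ^ (n - 2) * ((n : ℝ) + 1) / 3) :=
  stmt2_general n
end
end

section
/- For n ≥ 5, the eccentricity matrix E(W_n) of the wheel graph on n vertices is invertible if and only if n ≢ 1 (mod 3). -/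
open Matrix

noncomputable section

/-!
Write a vector as a hub value `a` and rim values `x : ZMod (n - 1) → ℝ`. Row `0` of
`E(W_n) v = 0` says `∑ x = 0`, and the row of rim vertex `k` says `a = 2 N_k` for the
closed-neighbourhood sum `N_k = x (k - 1) + x k + x (k + 1)`. Summing over `k` gives
`(n - 1) a = 6 ∑ x = 0`, so the kernel consists of the rim vectors with all `N_k = 0`.
Such an `x` is `3`-periodic, hence constant when `3` is a unit modulo `n - 1`, and then
`3 x = 0`; when `3 ∣ n - 1` the pattern `1, -1, 0, 1, -1, 0, …` is a nonzero solution.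
-/

open Finset

section CycleNbhdSum

variable {m : ℕ} {M : Type*}

def cycleNbhdSum [Add M] (x : ZMod m → M) (k : ZMod m) : M :=
  x (k - 1) + x k + x (k + 1)

theorem sum_cycleNbhdSum [NeZero m] [AddCommMonoid M] (x : ZMod m → M) :
    ∑ k, cycleNbhdSum x k = 3 • ∑ k, x k := by
  have hsub : ∑ k, x (k - 1) = ∑ k, x k := (Equiv.subRight (1 : ZMod m)).sum_comp x
  have hadd : ∑ k, x (k + 1) = ∑ k, x k := Equiv.sum_comp (Equiv.addRight (1 : ZMod m)) x
  simp only [cycleNbhdSum, sum_add_distrib, hsub, hadd, succ_nsmul, zero_nsmul, zero_add]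

theorem periodic_three_of_cycleNbhdSum_eq [AddCommGroup M] {x : ZMod m → M} {c : M}
    (hx : ∀ k, cycleNbhdSum x k = c) : Function.Periodic x 3 := by
  intro k
  have h₁ := hx (k + 1)
  have h₂ := hx (k + 2)
  simp only [cycleNbhdSum, add_sub_cancel_right,
    show k + 2 - 1 = k + 1 by ring, show k + 1 + 1 = k + 2 by ring,
    show k + 2 + 1 = k + 3 by ring] at h₁ h₂
  calc x (k + 3) = x (k + 1) + x (k + 2) + x (k + 3) - (x (k + 1) + x (k + 2)) := by abel
    _ = x k + x (k + 1) + x (k + 2) - (x (k + 1) + x (k + 2)) := by rw [h₂, ← h₁]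
    _ = x k := by abel

theorem Function.Periodic.eq_of_isUnit {α : Type*} {f : ZMod m → α} {a : ZMod m}
    (hf : Function.Periodic f a) (ha : IsUnit a) (k : ZMod m) : f k = f 0 := by
  obtain ⟨u, rfl⟩ := ha
  have hk : k = ((ZMod.cast (k * ((u⁻¹ : (ZMod m)ˣ) : ZMod m)) : ℤ) : ZMod m) * u := by
    rw [ZMod.intCast_zmod_cast, mul_assoc, Units.inv_mul, mul_one]
  rw [hk]
  exact hf.int_mul_eq _

theorem eq_zero_of_cycleNbhdSum_eq_zero [AddCommGroup M] [IsAddTorsionFree M]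
    (h3 : ¬ 3 ∣ m) {x : ZMod m → M} (hx : ∀ k, cycleNbhdSum x k = 0) : x = 0 := by
  have hconst := (periodic_three_of_cycleNbhdSum_eq hx).eq_of_isUnit
    (by exact_mod_cast (ZMod.isUnit_prime_iff_not_dvd Nat.prime_three).mpr h3)
  have h0 : 3 • x 0 = 0 := by
    simpa [cycleNbhdSum, hconst (-1), hconst 1, succ_nsmul] using hx 0
  funext k
  rw [hconst k, Pi.zero_apply, ← nsmul_eq_zero_iff_right three_ne_zero]
  exact h0

theorem exists_ne_zero_cycleNbhdSum_eq_zero {R : Type*} [Ring R] [Nontrivial R]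
    (h3 : 3 ∣ m) : ∃ x : ZMod m → R, x ≠ 0 ∧ ∀ k, cycleNbhdSum x k = 0 := by
  let χ := ZMod.castHom h3 (ZMod 3)
  let c : ZMod 3 → R := fun j => if j = 0 then 1 else if j = 1 then -1 else 0
  have hc : ∀ j, cycleNbhdSum c j = 0 := by
    intro j
    obtain rfl | rfl | rfl : j = 0 ∨ j = 1 ∨ j = 2 := by decide +revert
    all_goals simp +decide [cycleNbhdSum, c]
  refine ⟨fun k => c (χ k), fun h => ?_, fun k => ?_⟩
  · simpa [c] using congrFun h 0
  · simpa [cycleNbhdSum] using hc (χ k)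

end CycleNbhdSum

theorem ZMod.natCast_ne_zero_of_pos_of_lt {a m : ℕ} (ha : 0 < a) (ham : a < m) :
    (a : ZMod m) ≠ 0 := by
  rw [Ne, ZMod.natCast_eq_zero_iff]
  exact Nat.not_dvd_of_pos_of_lt ha ham

namespace Wheel

variable {m : ℕ} {M : Type*}

theorem EW_zero_zero : EW (m + 1) 0 0 = 0 := by
  simp [EW]

variable [NeZero m]

variable (m) in
def rimEquiv : ZMod m ≃ Fin m where
  toFun k := ⟨k.val, k.val_lt⟩
  invFun i := (i : ℕ)
  left_inv := ZMod.natCast_zmod_val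
  right_inv i := Fin.ext (ZMod.val_cast_of_lt i.isLt)

def rimVertex (k : ZMod m) : Fin (m + 1) := (rimEquiv m k).succ

theorem natCast_rimVertex (k : ZMod m) : ((rimVertex k : ℕ) : ZMod m) = k + 1 := by
  simp [rimVertex, rimEquiv]

theorem rimVertex_injective : Function.Injective (rimVertex (m := m)) :=
  (Fin.succ_injective m).comp (rimEquiv m).injective

theorem sum_univ_eq_add_sum_rimVertex [AddCommMonoid M] (f : Fin (m + 1) → M) :
    ∑ j, f j = f 0 + ∑ k, f (rimVertex k) := by
  rw [Fin.sum_univ_succ, ← (rimEquiv m).sum_comp]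
  rfl

theorem fun_eq_zero_iff [Zero M] (v : Fin (m + 1) → M) :
    v = 0 ↔ v 0 = 0 ∧ ∀ k, v (rimVertex k) = 0 := by
  refine ⟨fun hv => by simp [hv], fun ⟨h0, hk⟩ => funext fun j => ?_⟩
  cases j using Fin.cases with
  | zero => exact h0
  | succ i => simpa [rimVertex] using hk ((rimEquiv m).symm i)

theorem cons_comp_rimVertex (a : M) (x : ZMod m → M) :
    (Fin.cons a (x ∘ (rimEquiv m).symm) : Fin (m + 1) → M) ∘ rimVertex = x := by
  funext k
  simp [rimVertex]

theorem EW_zero_rimVertex (k : ZMod m) : EW (m + 1) 0 (rimVertex k) = 1 := by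
  simp [EW, (Fin.succ_ne_zero _).symm, rimVertex]

theorem EW_rimVertex_zero (k : ZMod m) : EW (m + 1) (rimVertex k) 0 = 1 := by
  simp [EW, rimVertex]

theorem EW_rimVertex_rimVertex (k l : ZMod m) :
    EW (m + 1) (rimVertex k) (rimVertex l) = if l ∈ ({k - 1, k, k + 1} : Finset _) then 0 else 2 := by
  have hk : ((rimVertex k : ℕ)) ≠ 0 := Fin.val_ne_zero_iff.mpr (Fin.succ_ne_zero _)
  have hl : ((rimVertex l : ℕ)) ≠ 0 := Fin.val_ne_zero_iff.mpr (Fin.succ_ne_zero _)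
  simp only [EW, of_apply, rimVertex_injective.eq_iff, hk, hl, or_self, if_false]
  rw [Nat.add_sub_cancel]
  simp only [natCast_rimVertex, mem_insert, mem_singleton]
  split_ifs <;> grind

theorem EW_mulVec_apply_zero (v : Fin (m + 1) → ℝ) :
    (EW (m + 1) *ᵥ v) 0 = ∑ k, v (rimVertex k) := by
  simp [mulVec, dotProduct, sum_univ_eq_add_sum_rimVertex, EW_zero_zero, EW_zero_rimVertex]

theorem EW_mulVec_apply_rimVertex (hm : 3 ≤ m) (v : Fin (m + 1) → ℝ) (k : ZMod m) :
    (EW (m + 1) *ᵥ v) (rimVertex k) =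
      v 0 + 2 * ∑ l, v (rimVertex l) - 2 * cycleNbhdSum (v ∘ rimVertex) k := by
  have h1 : (1 : ZMod m) ≠ 0 := by
    exact_mod_cast ZMod.natCast_ne_zero_of_pos_of_lt one_pos (by omega : 1 < m)
  have h2 : (2 : ZMod m) ≠ 0 := by
    exact_mod_cast ZMod.natCast_ne_zero_of_pos_of_lt two_pos (by omega : 2 < m)
  have hnbhd : ∑ l ∈ {k - 1, k, k + 1}, v (rimVertex l) = cycleNbhdSum (v ∘ rimVertex) k := by
    rw [sum_insert, sum_insert, sum_singleton, cycleNbhdSum, add_assoc]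
    · rfl
    · simpa using h1
    · simp only [mem_insert, mem_singleton, not_or]
      exact ⟨fun h => h1 (by linear_combination -h), fun h => h2 (by linear_combination -h)⟩
  have hentry : ∀ l, EW (m + 1) (rimVertex k) (rimVertex l) * v (rimVertex l) =
      2 * v (rimVertex l) - 2 * if l ∈ ({k - 1, k, k + 1} : Finset _) then v (rimVertex l) else 0 := by
    intro l
    rw [EW_rimVertex_rimVertex]
    split_ifs <;> ring
  simp only [mulVec, dotProduct, sum_univ_eq_add_sum_rimVertex, EW_rimVertex_zero, hentry,
    sum_sub_distrib, ← mul_sum, sum_ite_mem, univ_inter, hnbhd]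
  ring

theorem EW_mulVec_eq_zero_iff (hm : 3 ≤ m) (v : Fin (m + 1) → ℝ) :
    EW (m + 1) *ᵥ v = 0 ↔ v 0 = 0 ∧ ∀ k, cycleNbhdSum (v ∘ rimVertex) k = 0 := by
  have hsum := sum_cycleNbhdSum (v ∘ rimVertex)
  simp only [Function.comp_apply] at hsum
  rw [fun_eq_zero_iff, EW_mulVec_apply_zero]
  simp only [EW_mulVec_apply_rimVertex hm]
  constructor
  · rintro ⟨hrim, hrow⟩
    -- summing the rim rows over `k` forces the hub coordinate to vanish
    have hN : ∀ k, cycleNbhdSum (v ∘ rimVertex) k = v 0 / 2 := fun k => by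
      linarith [hrow k]
    rw [sum_congr rfl fun k _ => hN k, sum_const, card_univ, ZMod.card, hrim, smul_zero,
      nsmul_eq_zero_iff_right (NeZero.ne m), div_eq_zero_iff] at hsum
    have hv0 : v 0 = 0 := hsum.resolve_right two_ne_zero
    exact ⟨hv0, fun k => by rw [hN, hv0, zero_div]⟩
  · rintro ⟨hv0, hN⟩
    simp only [hN, sum_const_zero] at hsum
    have hrim := (nsmul_eq_zero_iff_right three_ne_zero).mp hsum.symm
    exact ⟨hrim, fun k => by rw [hv0, hrim, hN]; ring⟩

theorem isUnit_EW_iff (hm : 3 ≤ m) :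
    IsUnit (EW (m + 1)) ↔ ∀ x : ZMod m → ℝ, (∀ k, cycleNbhdSum x k = 0) → x = 0 := by
  rw [isUnit_iff_isUnit_det, isUnit_iff_ne_zero, Ne, ← exists_mulVec_eq_zero_iff, not_exists]
  constructor
  · intro hker x hx
    by_contra hx0
    refine hker (Fin.cons 0 (x ∘ (rimEquiv m).symm)) ⟨fun hv => hx0 ?_, ?_⟩
    · rw [← cons_comp_rimVertex 0 x, hv]
      rfl
    · rw [EW_mulVec_eq_zero_iff hm, cons_comp_rimVertex]
      exact ⟨rfl, hx⟩
  · rintro hrim v ⟨hv, hker⟩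
    obtain ⟨hv0, hN⟩ := (EW_mulVec_eq_zero_iff hm v).mp hker
    exact hv ((fun_eq_zero_iff v).mpr ⟨hv0, fun k => congrFun (hrim _ hN) k⟩)

end Wheel

theorem stmt5 (n : ℕ) (h : 5 ≤ n) :
    IsUnit (EW n) ↔ n % 3 ≠ 1 := by
  obtain ⟨m, rfl⟩ : ∃ m, n = m + 1 := ⟨n - 1, by omega⟩
  have : NeZero m := ⟨by omega⟩
  rw [Wheel.isUnit_EW_iff (by omega), show (m + 1) % 3 ≠ 1 ↔ ¬ 3 ∣ m by omega]
  refine ⟨fun hker h3 => ?_, fun h3 x => eq_zero_of_cycleNbhdSum_eq_zero h3⟩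
  obtain ⟨x, hx0, hx⟩ := exists_ne_zero_cycleNbhdSum_eq_zero (R := ℝ) h3
  exact hx0 (hker x hx)
end
end

section
/- For n ≥ 5, the eccentricity matrix E(W_n) of the wheel graph is irreducible, i.e., (I_n + E(W_n))^{n-1} has all entries strictly positive. -/
open Matrix

noncomputable section

section Aux
variable {n : ℕ}

lemma EW_nonneg (n : ℕ) (i j : Fin n) : 0 ≤ EW n i j := by
  unfold EW; simp only [Matrix.of_apply]; split_ifs <;> norm_num

lemma M_nonneg (n : ℕ) (i j : Fin n) : 0 ≤ (1 + EW n) i j := by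
  simp only [Matrix.add_apply, Matrix.one_apply]
  have := EW_nonneg n i j
  split_ifs <;> linarith

lemma M_diag_pos (n : ℕ) (i : Fin n) : 0 < (1 + EW n) i i := by
  simp only [Matrix.add_apply, Matrix.one_apply_eq]
  have := EW_nonneg n i i; linarith

lemma M_col0_pos (n : ℕ) (hn : 0 < n) (i : Fin n) : 0 < (1 + EW n) i ⟨0, hn⟩ := by
  by_cases h : i = ⟨0, hn⟩
  · subst h; exact M_diag_pos n _
  · simp only [Matrix.add_apply, Matrix.one_apply_ne h, EW]
    simp only [Matrix.of_apply, if_neg h]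
    norm_num

lemma M_row0_pos (n : ℕ) (hn : 0 < n) (j : Fin n) : 0 < (1 + EW n) ⟨0, hn⟩ j := by
  by_cases h : (⟨0, hn⟩ : Fin n) = j
  · subst h; exact M_diag_pos n _
  · simp only [Matrix.add_apply, Matrix.one_apply_ne h, EW]
    simp only [Matrix.of_apply, if_neg h]
    norm_num

lemma Mpow_nonneg (n k : ℕ) (i j : Fin n) : 0 ≤ ((1 + EW n) ^ k) i j := by
  induction k generalizing i j with
  | zero =>
    simp only [pow_zero, Matrix.one_apply]; split_ifs <;> norm_num
  | succ k ih =>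
    rw [pow_succ, Matrix.mul_apply]
    exact Finset.sum_nonneg fun a _ => mul_nonneg (ih i a) (M_nonneg n a j)

lemma Mpow_diag_pos (n k : ℕ) (i : Fin n) : 0 < ((1 + EW n) ^ k) i i := by
  induction k with
  | zero => simp [pow_zero, Matrix.one_apply_eq]
  | succ k ih =>
    rw [pow_succ, Matrix.mul_apply]
    refine Finset.sum_pos' (fun a _ => mul_nonneg (Mpow_nonneg n k i a) (M_nonneg n a i)) ?_
    exact ⟨i, Finset.mem_univ i, mul_pos ih (M_diag_pos n i)⟩

lemma Msq_pos (n : ℕ) (hn : 0 < n) (i j : Fin n) : 0 < ((1 + EW n) ^ (2:ℕ)) i j := by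
  rw [pow_two, Matrix.mul_apply]
  refine Finset.sum_pos' (fun a _ => mul_nonneg (M_nonneg n i a) (M_nonneg n a j)) ?_
  exact ⟨⟨0, hn⟩, Finset.mem_univ _, mul_pos (M_col0_pos n hn i) (M_row0_pos n hn j)⟩

end Aux

theorem stmt7 (n : ℕ) (h : 5 ≤ n) (i j : Fin n) :
    0 < ((1 + EW n) ^ (n - 1)) i j := by
  have hn : 0 < n := by omega
  have hsplit : n - 1 = (n - 3) + 2 := by omega
  rw [hsplit, pow_add, Matrix.mul_apply]
  refine Finset.sum_pos' (fun a _ => mul_nonneg (Mpow_nonneg n (n-3) i a) (Msq_pos n hn a j).le) ?_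
  exact ⟨i, Finset.mem_univ i, mul_pos (Mpow_diag_pos n (n-3) i) (Msq_pos n hn i j)⟩
end
end

section
/- For n ≥ 5, the eccentricity matrix E(W_n) of the wheel graph is not a Euclidean distance matrix; in particular, there exists a vector x ∈ R^n with x'e = 0 and x'E(W_n)x > 0. -/
open Matrix

noncomputable section

/-!
If `EW n` were the matrix of squared distances `‖p i - p j‖²` of points in a Euclidean space,
it would equal `a 1ᵀ + 1 aᵀ - 2 G` with `a i = ‖p i‖²` and `G` the Gram matrix of the `p i`, so
`xᵀ (EW n) x = -2 ‖∑ x i • p i‖² ≤ 0` whenever `∑ x i = 0`. The second difference `x = e₁ - 2e₂ + e₃`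
along three consecutive rim vertices violates this: rim neighbours are at eccentricity `0`, while
vertices `1` and `3` are not adjacent once the rim has at least four vertices, so
`xᵀ (EW n) x = 2 · 2 = 4`.
-/

section SquaredDistances

variable {ι E : Type*} [NormedAddCommGroup E] [InnerProductSpace ℝ E]

lemma sqDist_matrix_eq (p : ι → E) :
    (of fun i j => dist (p i) (p j) ^ 2 : Matrix ι ι ℝ) =
      vecMulVec (fun i => ‖p i‖ ^ 2) 1 + vecMulVec 1 (fun i => ‖p i‖ ^ 2) - (2 : ℝ) • gram ℝ p := by
  ext i j
  simp only [dist_eq_norm, norm_sub_sq_real, of_apply, vecMulVec_one, one_vecMulVec,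
    Matrix.sub_apply, Matrix.add_apply, replicateCol_apply, replicateRow_apply, Matrix.smul_apply,
    gram_apply, smul_eq_mul]
  ring

variable [Fintype ι]

lemma dotProduct_sqDist_mulVec_eq (p : ι → E) {x : ι → ℝ} (hx : x ⬝ᵥ 1 = 0) :
    x ⬝ᵥ (of fun i j => dist (p i) (p j) ^ 2 : Matrix ι ι ℝ) *ᵥ x = -2 * ‖∑ i, x i • p i‖ ^ 2 := by
  have hgram : x ⬝ᵥ gram ℝ p *ᵥ x = ‖∑ i, x i • p i‖ ^ 2 := by
    rw [← real_inner_self_eq_norm_sq, ← star_dotProduct_gram_mulVec, star_trivial]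
  rw [sqDist_matrix_eq, sub_mulVec, add_mulVec, vecMulVec_mulVec, vecMulVec_mulVec, smul_mulVec,
    dotProduct_sub, dotProduct_add, dotProduct_smul, dotProduct_smul, dotProduct_smul, hgram,
    dotProduct_comm 1 x, hx]
  simp only [MulOpposite.op_zero, zero_smul, smul_zero, add_zero, smul_eq_mul]
  ring

lemma dotProduct_sqDist_mulVec_nonpos (p : ι → E) {x : ι → ℝ} (hx : x ⬝ᵥ 1 = 0) :
    x ⬝ᵥ (of fun i j => dist (p i) (p j) ^ 2 : Matrix ι ι ℝ) *ᵥ x ≤ 0 := by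
  rw [dotProduct_sqDist_mulVec_eq p hx]
  nlinarith [sq_nonneg ‖∑ i, x i • p i‖]

end SquaredDistances

section SecondDifference

variable {ι : Type*} [Fintype ι] [DecidableEq ι]

def secondDiff (a b c : ι) : ι → ℝ := Pi.single a 1 - Pi.single b 2 + Pi.single c 1

lemma secondDiff_dotProduct_one (a b c : ι) : secondDiff a b c ⬝ᵥ 1 = 0 := by
  simp only [secondDiff, add_dotProduct, sub_dotProduct, single_dotProduct, Pi.one_apply, mul_one]
  norm_num

lemma secondDiff_dotProduct_mulVec {M : Matrix ι ι ℝ} (hM : M.IsSymm) (hdiag : ∀ i, M i i = 0)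
    (a b c : ι) :
    secondDiff a b c ⬝ᵥ M *ᵥ secondDiff a b c = 2 * M a c - 4 * (M a b + M b c) := by
  simp only [secondDiff, mulVec_add, mulVec_sub, mulVec_single, MulOpposite.op_one, one_smul,
    MulOpposite.op_ofNat, dotProduct_add, dotProduct_sub, add_dotProduct, sub_dotProduct,
    single_dotProduct, col_apply, hdiag, mul_zero, zero_sub, one_mul, dotProduct_smul, sub_zero,
    smul_add, MulOpposite.smul_eq_mul_unop, MulOpposite.unop_ofNat, add_zero,
    hM.apply b a, hM.apply c a, hM.apply c b]
  ring

end SecondDifference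

lemma EW_isSymm (n : ℕ) : (EW n).IsSymm := by
  ext i j
  simp only [transpose_apply, EW, of_apply, eq_comm (a := i), or_comm]

lemma EW_apply_self (n : ℕ) (i : Fin n) : EW n i i = 0 := by
  simp [EW]

lemma EW_apply_rim_succ {n a : ℕ} (ha : 1 ≤ a) (hn : a + 1 < n) :
    EW n ⟨a, by omega⟩ ⟨a + 1, by omega⟩ = 0 := by
  simp only [EW, of_apply]
  rw [if_neg (by simp [Fin.ext_iff]), if_neg (by simp; omega), if_pos (by left; push_cast; ring)]

lemma EW_apply_one_three {n : ℕ} (hn : 5 ≤ n) : EW n ⟨1, by omega⟩ ⟨3, by omega⟩ = 2 := by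
  have natCast_ne_zero : ∀ k : ℕ, 0 < k → k < n - 1 → (k : ZMod (n - 1)) ≠ 0 := fun k hk hkn h =>
    absurd (Nat.le_of_dvd hk ((ZMod.natCast_eq_zero_iff k _).mp h)) (by omega)
  simp only [EW, of_apply]
  rw [if_neg (by simp [Fin.ext_iff]), if_neg (by simp), if_neg]
  rintro (h | h)
  · exact natCast_ne_zero 1 (by omega) (by omega) (by push_cast at h ⊢; linear_combination h)
  · exact natCast_ne_zero 3 (by omega) (by omega) (by push_cast at h ⊢; linear_combination -h)

theorem stmt8 (n : ℕ) (h : 5 ≤ n) :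
    (¬ ∃ (r : ℕ) (p : Fin n → EuclideanSpace ℝ (Fin r)),
        ∀ i j, EW n i j = dist (p i) (p j) ^ 2) ∧
      ∃ x : Fin n → ℝ, x ⬝ᵥ (fun _ => (1 : ℝ)) = 0 ∧ 0 < x ⬝ᵥ (EW n).mulVec x := by
  set x := secondDiff (⟨1, by omega⟩ : Fin n) ⟨2, by omega⟩ ⟨3, by omega⟩
  have hx : x ⬝ᵥ 1 = 0 := secondDiff_dotProduct_one _ _ _
  have hpos : 0 < x ⬝ᵥ EW n *ᵥ x := by
    rw [secondDiff_dotProduct_mulVec (EW_isSymm n) (EW_apply_self n), EW_apply_one_three h,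
      EW_apply_rim_succ (a := 1) le_rfl (by omega),
      EW_apply_rim_succ (a := 2) (by norm_num) (by omega)]
    norm_num
  refine ⟨fun ⟨r, p, hp⟩ => ?_, x, hx, hpos⟩
  have hEW : EW n = of fun i j => dist (p i) (p j) ^ 2 := ext hp
  exact (dotProduct_sqDist_mulVec_nonpos p hx).not_gt (hEW ▸ hpos)
end
end

section
/- For n ≥ 5, the vector ((n−1)/ρ, 1, 1, …, 1)' ∈ R^n with ρ = (n−4) + √(n²−7n+15) is an eigenvector of E(W_n) corresponding to the eigenvalue ρ. -/
open Matrix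

noncomputable section

namespace Stmt11Aux

/-- The inverse of `j ↦ (j : ZMod m)` from `{1, …, m} ⊆ Fin (m+1)` to `ZMod m`. -/
def lift (m : ℕ) [NeZero m] (a : ZMod m) : Fin (m + 1) :=
  if a.val = 0 then ⟨m, Nat.lt_succ_self m⟩
  else ⟨a.val, (ZMod.val_lt a).trans (Nat.lt_succ_self m)⟩

lemma lift_ne_zero {m : ℕ} [NeZero m] (a : ZMod m) : lift m a ≠ 0 := by
  unfold lift
  split
  next h => simp [Fin.ext_iff, NeZero.ne m]
  next h => simp [Fin.ext_iff, h]

lemma cast_lift {m : ℕ} [NeZero m] (a : ZMod m) :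
    (((lift m a : Fin (m + 1)) : ℕ) : ZMod m) = a := by
  unfold lift
  split
  next h => simpa using ((ZMod.val_eq_zero a).mp h).symm
  next h => exact ZMod.natCast_rightInverse a

lemma cast_inj {m : ℕ} [NeZero m] {j k : Fin (m + 1)} (hj : j ≠ 0) (hk : k ≠ 0)
    (h : ((j : ℕ) : ZMod m) = ((k : ℕ) : ZMod m)) : j = k := by
  have hm : 0 < m := Nat.pos_of_ne_zero (NeZero.ne m)
  have h' : (j : ℕ) % m = (k : ℕ) % m := by
    rwa [ZMod.natCast_eq_natCast_iff] at h
  have hj1 : 1 ≤ (j : ℕ) := by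
    rcases Nat.eq_zero_or_pos (j : ℕ) with h0 | h0
    · exact absurd (Fin.ext (by simp [h0])) hj
    · exact h0
  have hk1 : 1 ≤ (k : ℕ) := by
    rcases Nat.eq_zero_or_pos (k : ℕ) with h0 | h0
    · exact absurd (Fin.ext (by simp [h0])) hk
    · exact h0
  have hjm : (j : ℕ) ≤ m := Nat.lt_succ_iff.mp j.isLt
  have hkm : (k : ℕ) ≤ m := Nat.lt_succ_iff.mp k.isLt
  have e1 : ∀ x : ℕ, 1 ≤ x → x ≤ m → x % m = if x = m then 0 else x := by
    intro x h1 h2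
    rcases eq_or_lt_of_le h2 with rfl | hlt
    · simp
    · simp [Nat.mod_eq_of_lt hlt, Nat.ne_of_lt hlt]
  rw [e1 _ hj1 hjm, e1 _ hk1 hkm] at h'
  apply Fin.ext
  split_ifs at h' <;> omega

lemma lift_cast {m : ℕ} [NeZero m] {j : Fin (m + 1)} (hj : j ≠ 0) :
    lift m ((j : ℕ) : ZMod m) = j :=
  cast_inj (lift_ne_zero _) hj (cast_lift _)

end Stmt11Aux

open Stmt11Aux

theorem stmt11 (n : ℕ) (h : 5 ≤ n)
    (ρ : ℝ) (hρ : ρ = (n : ℝ) - 4 + Real.sqrt ((n : ℝ) ^ 2 - 7 * n + 15))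
    (v : Fin n → ℝ) (hv : ∀ i, v i = if (i : ℕ) = 0 then ((n : ℝ) - 1) / ρ else 1) :
    (EW n).mulVec v = ρ • v ∧ v ≠ 0 := by
  obtain ⟨m, rfl⟩ : ∃ m, n = m + 1 := ⟨n - 1, by omega⟩
  have hm4 : 4 ≤ m := by omega
  haveI : NeZero m := ⟨by omega⟩
  have hm4' : (4 : ℝ) ≤ (m : ℝ) := by exact_mod_cast hm4
  have harg : (0 : ℝ) ≤ ((m + 1 : ℕ) : ℝ) ^ 2 - 7 * ((m + 1 : ℕ) : ℝ) + 15 := by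
    push_cast; nlinarith
  have hs2 : Real.sqrt (((m + 1 : ℕ) : ℝ) ^ 2 - 7 * ((m + 1 : ℕ) : ℝ) + 15) ^ 2
      = ((m + 1 : ℕ) : ℝ) ^ 2 - 7 * ((m + 1 : ℕ) : ℝ) + 15 := Real.sq_sqrt harg
  have hsnn : (0 : ℝ) ≤ Real.sqrt (((m + 1 : ℕ) : ℝ) ^ 2 - 7 * ((m + 1 : ℕ) : ℝ) + 15) :=
    Real.sqrt_nonneg _
  have hρpos : 0 < ρ := by
    have hsnn' := hsnn
    rw [hρ]; push_cast at hsnn' ⊢; nlinarith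
  have hquad : ρ ^ 2 = 2 * ((m : ℝ) - 3) * ρ + (m : ℝ) := by
    rw [hρ]; push_cast at hs2 ⊢; nlinarith
  constructor
  · funext i
    show ∑ j, EW (m + 1) i j * v j = (ρ • v) i
    rw [Pi.smul_apply, smul_eq_mul]
    by_cases hi : i = 0
    · subst hi
      have hterm : ∀ j : Fin (m + 1), EW (m + 1) 0 j * v j = if j = 0 then 0 else 1 := by
        intro j
        by_cases hj : j = 0
        · subst hj; simp [EW]
        · have hjv : (j : ℕ) ≠ 0 := fun hc => hj (Fin.ext (by simp [hc]))
          simp [EW, (Ne.symm hj), hj, hv j, hjv]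
      rw [Finset.sum_congr rfl fun j _ => hterm j]
      have : (∑ j : Fin (m + 1), if j = 0 then (0 : ℝ) else 1) = m := by
        simp [Finset.sum_ite, Finset.filter_eq', Finset.filter_ne']
      rw [this, hv 0]
      simp only [Fin.val_zero, if_pos rfl, if_true]
      rw [mul_comm, div_mul_cancel₀ _ hρpos.ne']
      push_cast
      ring
    · have hiv : (i : ℕ) ≠ 0 := fun hc => hi (Fin.ext (by simp [hc]))
      haveI : Fact (1 < m) := ⟨by omega⟩
      set i' : ZMod m := ((i : ℕ) : ZMod m) with hi'
      have h2ne : (2 : ZMod m) ≠ 0 := by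
        intro hc
        have h2 : ((2 : ℕ) : ZMod m) = ((0 : ℕ) : ZMod m) := by push_cast; exact hc
        rw [ZMod.natCast_eq_natCast_iff] at h2
        have := h2
        unfold Nat.ModEq at this
        rw [Nat.mod_eq_of_lt (by omega), Nat.mod_eq_of_lt (by omega)] at this
        omega
      have h1ne : (1 : ZMod m) ≠ 0 := one_ne_zero
      -- the three special vertices
      have ne1 : i ≠ lift m (i' + 1) := by
        intro hc
        have hcl := cast_lift (m := m) (i' + 1)
        rw [← hc] at hcl
        exact h1ne (by linear_combination -hcl)
      have ne2 : i ≠ lift m (i' - 1) := by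
        intro hc
        have hcl := cast_lift (m := m) (i' - 1)
        rw [← hc] at hcl
        exact h1ne (by linear_combination hcl)
      have ne3 : lift m (i' + 1) ≠ lift m (i' - 1) := by
        intro hc
        have h1 := cast_lift (m := m) (i' + 1)
        have h2 := cast_lift (m := m) (i' - 1)
        rw [hc] at h1
        exact h2ne (by linear_combination h2 - h1)
      -- the predicate of "zero" entries in row i among cycle vertices
      set Q : Fin (m + 1) → Prop := fun j =>
        i = j ∨ (((j : ℕ) : ZMod m) - i' = 1 ∨ i' - ((j : ℕ) : ZMod m) = 1) with hQ
      have hQdec : DecidablePred Q := fun j => by rw [hQ]; infer_instance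
      have hfilter : (Finset.univ.erase (0 : Fin (m + 1))).filter Q
          = {i, lift m (i' + 1), lift m (i' - 1)} := by
        ext j
        simp only [Finset.mem_filter, Finset.mem_erase, Finset.mem_univ, and_true,
          Finset.mem_insert, Finset.mem_singleton, true_and, hQ]
        constructor
        · rintro ⟨hj0, hQj⟩
          rcases hQj with rfl | hadj | hadj
          · exact Or.inl rfl
          · refine Or.inr (Or.inl ?_)
            rw [← lift_cast (m := m) hj0]
            congr 1
            linear_combination hadj
          · refine Or.inr (Or.inr ?_)
            rw [← lift_cast (m := m) hj0]
            congr 1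
            linear_combination -hadj
        · rintro (rfl | rfl | rfl)
          · exact ⟨hi, Or.inl rfl⟩
          · refine ⟨lift_ne_zero _, Or.inr (Or.inl ?_)⟩
            rw [cast_lift]; ring
          · refine ⟨lift_ne_zero _, Or.inr (Or.inr ?_)⟩
            rw [cast_lift]; ring
      have hcard3 : ((Finset.univ.erase (0 : Fin (m + 1))).filter Q).card = 3 := by
        rw [hfilter]
        rw [Finset.card_insert_of_notMem (by simp [ne1, ne2]),
          Finset.card_insert_of_notMem (by simp [ne3]), Finset.card_singleton]
      have hcardE : (Finset.univ.erase (0 : Fin (m + 1))).card = m := by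
        simp
      have hcardN : ((Finset.univ.erase (0 : Fin (m + 1))).filter fun j => ¬ Q j).card
          = m - 3 := by
        have := Finset.card_filter_add_card_filter_not (s := Finset.univ.erase (0 : Fin (m + 1))) (p := Q)
        omega
      -- split the sum
      rw [← Finset.add_sum_erase Finset.univ _ (Finset.mem_univ (0 : Fin (m + 1)))]
      have hf0 : EW (m + 1) i 0 * v 0 = ((m : ℝ)) / ρ := by
        have h0 : EW (m + 1) i 0 = 1 := by
          simp [EW, hi, hiv]
        rw [h0, hv 0]
        simp only [Fin.val_zero, if_pos rfl]
        push_cast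
        ring
      have hfj : ∀ j ∈ Finset.univ.erase (0 : Fin (m + 1)),
          EW (m + 1) i j * v j = if Q j then (0 : ℝ) else 2 := by
        intro j hj
        have hj0 : j ≠ 0 := (Finset.mem_erase.mp hj).1
        have hjv : (j : ℕ) ≠ 0 := fun hc => hj0 (Fin.ext (by simp [hc]))
        rw [hv j, if_neg hjv, mul_one]
        by_cases hij : i = j
        · have : Q j := Or.inl hij
          rw [if_pos this]
          subst hij
          simp [EW]
        · simp only [EW, Matrix.of_apply, if_neg hij, hiv, hjv, or_self, if_neg,
            Nat.add_sub_cancel, hQ]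
          simp [hij, hiv, hjv, hi']
      rw [Finset.sum_congr rfl hfj]
      rw [Finset.sum_ite, Finset.sum_const, Finset.sum_const]
      rw [hcard3, hcardN]
      rw [hv i, if_neg hiv, hf0]
      have hm3 : ((m - 3 : ℕ) : ℝ) = (m : ℝ) - 3 := by
        push_cast [Nat.cast_sub (by omega : 3 ≤ m)]; ring
      rw [nsmul_eq_mul, nsmul_eq_mul, hm3]
      field_simp
      linear_combination -hquad
  · intro hc
    have h1 : v ⟨1, by omega⟩ = 0 := congrFun hc _
    rw [hv ⟨1, by omega⟩] at h1
    norm_num at h1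
end
end

section
/- For n ≥ 5 with n ≡ 1 (mod 3), the rank of the eccentricity matrix E(W_n) of the wheel graph is n − 2; in particular, the vectors x = (0, 1,0,−1, 1,0,−1, …, 1,0,−1)' and y = (0, 0,1,−1, 0,1,−1, …, 0,1,−1)' span the null space of E(W_n). -/
open Matrix

noncomputable section

/-- The vector `(0, 1,0,-1, 1,0,-1, …)` in `R^n`. -/
def xvec (n : ℕ) : Fin n → ℝ := fun i =>
  if (i : ℕ) = 0 then 0
  else if (i : ℕ) % 3 = 1 then 1
  else if (i : ℕ) % 3 = 2 then 0
  else -1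

/-- The vector `(0, 0,1,-1, 0,1,-1, …)` in `R^n`. -/
def yvec (n : ℕ) : Fin n → ℝ := fun i =>
  if (i : ℕ) = 0 then 0
  else if (i : ℕ) % 3 = 1 then 0
  else if (i : ℕ) % 3 = 2 then 1
  else -1

namespace WheelAux

variable {m : ℕ} [NeZero m]

def w (m : ℕ) [NeZero m] (k : ZMod m) : Fin (m + 1) := Fin.succ ⟨k.val, k.val_lt⟩

lemma w_coe (k : ZMod m) : ((w m k : ℕ)) = k.val + 1 := rfl

lemma w_ne_zero (k : ZMod m) : w m k ≠ 0 := Fin.succ_ne_zero _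

lemma w_inj {k l : ZMod m} (h : w m k = w m l) : k = l := by
  have h2 : k.val + 1 = l.val + 1 := by
    have := congrArg Fin.val h
    simpa [w_coe] using this
  exact ZMod.val_injective m (by omega)

lemma cast_w (k : ZMod m) : (((w m k : ℕ) : ZMod m)) = k + 1 := by
  rw [w_coe]
  push_cast
  rw [ZMod.natCast_rightInverse k]

lemma sum_w (f : Fin (m + 1) → ℝ) : ∑ k : ZMod m, f (w m k) = ∑ j : Fin m, f j.succ := by
  apply Fintype.sum_bijective (fun k : ZMod m => (⟨k.val, k.val_lt⟩ : Fin m))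
  · rw [Fintype.bijective_iff_injective_and_card]
    exact ⟨fun a b hab => ZMod.val_injective m (congrArg Fin.val hab), by simp [ZMod.card]⟩
  · intro k; rfl

lemma eq_zero_or_w (i : Fin (m + 1)) : i = 0 ∨ ∃ k : ZMod m, i = w m k := by
  rcases Fin.eq_zero_or_eq_succ i with h | ⟨j, rfl⟩
  · exact Or.inl h
  · refine Or.inr ⟨((j : ℕ) : ZMod m), ?_⟩
    apply Fin.ext
    simp [w_coe, ZMod.val_natCast_of_lt j.isLt]

lemma one_ne (hm : 4 ≤ m) : (1 : ZMod m) ≠ 0 := by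
  haveI : Fact (1 < m) := ⟨by omega⟩
  intro h
  have := congrArg ZMod.val h
  rw [ZMod.val_one, ZMod.val_zero] at this
  omega

lemma two_ne (hm : 4 ≤ m) : (2 : ZMod m) ≠ 0 := by
  intro h
  have h2 : ((2 : ℕ) : ZMod m) = 0 := by push_cast; exact h
  have := congrArg ZMod.val h2
  rw [ZMod.val_natCast_of_lt (by omega), ZMod.val_zero] at this
  omega

lemma EW_zero_zero : EW (m + 1) 0 0 = 0 := by simp [EW]

lemma EW_zero_w (k : ZMod m) : EW (m + 1) 0 (w m k) = 1 := by
  have h1 : (0 : Fin (m + 1)) ≠ w m k := fun h => w_ne_zero k h.symm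
  simp [EW, h1]

lemma EW_w_zero (k : ZMod m) : EW (m + 1) (w m k) 0 = 1 := by
  simp [EW, w_ne_zero k]

lemma EW_w_w (hm : 4 ≤ m) (k l : ZMod m) :
    EW (m + 1) (w m k) (w m l) = if l = k ∨ l = k + 1 ∨ l = k - 1 then 0 else 2 := by
  have key : EW (m + 1) (w m k) (w m l) =
      if w m k = w m l then 0
      else if ((w m k : ℕ) = 0 ∨ (w m l : ℕ) = 0) then 1
      else if (((w m l : ℕ) : ZMod m) - ((w m k : ℕ) : ZMod m) = 1
              ∨ ((w m k : ℕ) : ZMod m) - ((w m l : ℕ) : ZMod m) = 1) then 0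
      else 2 := by
    simp only [EW, Matrix.of_apply, Nat.add_sub_cancel]
  rw [key]
  by_cases hlk : l = k
  · subst hlk; simp
  · have hne : w m k ≠ w m l := fun hh => hlk (w_inj hh).symm
    rw [if_neg hne, if_neg (by simp [w_coe])]
    rw [cast_w, cast_w]
    have hsub1 : l + 1 - (k + 1) = l - k := by ring
    have hsub2 : k + 1 - (l + 1) = k - l := by ring
    rw [hsub1, hsub2]
    have hiff : (l - k = 1 ∨ k - l = 1) ↔ (l = k ∨ l = k + 1 ∨ l = k - 1) := by
      constructor
      · rintro (hh | hh)
        · exact Or.inr (Or.inl (by linear_combination hh))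
        · exact Or.inr (Or.inr (by linear_combination -hh))
      · rintro (hh | hh | hh)
        · exact absurd hh hlk
        · exact Or.inl (by linear_combination hh)
        · exact Or.inr (by linear_combination -hh)
    rw [if_congr hiff rfl rfl]

lemma mulVec_zero_eq (z : Fin (m + 1) → ℝ) :
    (EW (m + 1)).mulVec z 0 = ∑ k : ZMod m, z (w m k) := by
  have h0 : (EW (m + 1)).mulVec z 0 = ∑ j, EW (m + 1) 0 j * z j := rfl
  rw [h0, Fin.sum_univ_succ, EW_zero_zero, zero_mul, zero_add,
    ← sum_w (fun j => EW (m + 1) 0 j * z j)]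
  apply Finset.sum_congr rfl
  intro k _
  rw [EW_zero_w, one_mul]

lemma mulVec_w_eq (hm : 4 ≤ m) (z : Fin (m + 1) → ℝ) (k : ZMod m) :
    (EW (m + 1)).mulVec z (w m k) =
      z 0 + (2 * ∑ l : ZMod m, z (w m l)
        - 2 * z (w m k) - 2 * z (w m (k + 1)) - 2 * z (w m (k - 1))) := by
  have hk1 : k ≠ k + 1 := fun h => one_ne hm (by linear_combination -h)
  have hk2 : k ≠ k - 1 := fun h => one_ne hm (by linear_combination h)
  have hk3 : k + 1 ≠ k - 1 := fun h => two_ne hm (by linear_combination h)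
  have h0 : (EW (m + 1)).mulVec z (w m k) = ∑ j, EW (m + 1) (w m k) j * z j := rfl
  rw [h0, Fin.sum_univ_succ, EW_w_zero, one_mul,
    ← sum_w (fun j => EW (m + 1) (w m k) j * z j)]
  congr 1
  have step : ∀ l : ZMod m, EW (m + 1) (w m k) (w m l) * z (w m l) =
      2 * z (w m l) - (if l ∈ ({k, k + 1, k - 1} : Finset (ZMod m)) then 2 * z (w m l) else 0) := by
    intro l
    rw [EW_w_w hm]
    by_cases hl : l = k ∨ l = k + 1 ∨ l = k - 1
    · rw [if_pos hl, if_pos (by simpa using hl)]; ring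
    · rw [if_neg hl, if_neg (by simpa using hl)]; ring
  rw [Finset.sum_congr rfl (fun l _ => step l), Finset.sum_sub_distrib,
    Finset.sum_ite_mem, Finset.univ_inter, Finset.mul_sum,
    Finset.sum_insert (by simp [hk1, hk2]),
    Finset.sum_insert (by simp [hk3]), Finset.sum_singleton]
  ring

lemma sum_range_mod3 (f : ℕ → ℝ) (t : ℕ) :
    ∑ v ∈ Finset.range (3 * t), f (v % 3) = t * (f 0 + f 1 + f 2) := by
  induction t with
  | zero => simp
  | succ t ih =>
      have h : 3 * (t + 1) = (3 * t) + 1 + 1 + 1 := by ring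
      rw [h, Finset.sum_range_succ, Finset.sum_range_succ, Finset.sum_range_succ, ih,
        show (3 * t) % 3 = 0 by omega, show (3 * t + 1) % 3 = 1 by omega,
        show (3 * t + 1 + 1) % 3 = 2 by omega]
      push_cast; ring

lemma sum_zmod (F : ZMod m → ℝ) :
    ∑ k : ZMod m, F k = ∑ v ∈ Finset.range m, F ((v : ℕ) : ZMod m) := by
  rw [← Fin.sum_univ_eq_sum_range (fun v => F ((v : ℕ) : ZMod m)) m]
  apply Fintype.sum_bijective (fun k : ZMod m => (⟨k.val, k.val_lt⟩ : Fin m))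
  · rw [Fintype.bijective_iff_injective_and_card]
    exact ⟨fun a b hab => ZMod.val_injective m (congrArg Fin.val hab), by simp [ZMod.card]⟩
  · intro k
    simp [ZMod.natCast_rightInverse k]

lemma periodic_eval (Z : ZMod m → ℝ) (hper : ∀ k, Z (k + 3) = Z k) (v : ℕ) :
    Z ((v : ℕ) : ZMod m) = Z ((v % 3 : ℕ) : ZMod m) := by
  induction v using Nat.strong_induction_on with
  | _ v ih =>
    by_cases hv : v < 3
    · rw [Nat.mod_eq_of_lt hv]
    · have hcast : ((v : ℕ) : ZMod m) = ((v - 3 : ℕ) : ZMod m) + 3 := by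
        have h1 : ((((v - 3) + 3 : ℕ)) : ZMod m) = ((v - 3 : ℕ) : ZMod m) + 3 := by push_cast; ring
        rw [← h1, show v - 3 + 3 = v by omega]
      rw [hcast, hper, ih (v - 3) (by omega), show (v - 3) % 3 = v % 3 by omega]

lemma val_add_one_mod3 (hm : 4 ≤ m) (h3 : m % 3 = 0) (k : ZMod m) :
    (k + 1).val % 3 = (k.val + 1) % 3 := by
  haveI : Fact (1 < m) := ⟨by omega⟩
  rw [ZMod.val_add, ZMod.val_one, Nat.mod_mod_of_dvd _ ⟨m / 3, by omega⟩]

end WheelAux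

open WheelAux

theorem stmt13 (n : ℕ) (h : 5 ≤ n) (h1 : n % 3 = 1) :
    (EW n).rank = n - 2 ∧
      ∀ z : Fin n → ℝ,
        (EW n).mulVec z = 0 ↔ ∃ a b : ℝ, z = a • xvec n + b • yvec n := by
  obtain ⟨m, rfl⟩ : ∃ m, n = m + 1 := ⟨n - 1, by omega⟩
  have hm : 4 ≤ m := by omega
  have h3 : m % 3 = 0 := by omega
  haveI : NeZero m := ⟨by omega⟩
  have hdvd : (3 : ℕ) ∣ m := ⟨m / 3, by omega⟩
  -- values of the combination a•x+b•y
  have hxy0 : ∀ a b : ℝ, (a • xvec (m + 1) + b • yvec (m + 1)) 0 = 0 := by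
    intro a b; simp [xvec, yvec]
  have hxyw : ∀ (a b : ℝ) (k : ZMod m), (a • xvec (m + 1) + b • yvec (m + 1)) (w m k) =
      if k.val % 3 = 0 then a else if k.val % 3 = 1 then b else -a - b := by
    intro a b k
    have hc : ((w m k : ℕ)) = k.val + 1 := w_coe k
    have hr : k.val % 3 = 0 ∨ k.val % 3 = 1 ∨ k.val % 3 = 2 := by omega
    rcases hr with hr | hr | hr
    · simp [xvec, yvec, hc, hr, show (k.val + 1) % 3 = 1 by omega]
    · simp [xvec, yvec, hc, hr, show (k.val + 1) % 3 = 2 by omega]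
    · simp [xvec, yvec, hc, hr, show (k.val + 1) % 3 = 0 by omega]
      ring
  have key : ∀ z : Fin (m + 1) → ℝ,
      (EW (m + 1)).mulVec z = 0 ↔ ∃ a b : ℝ, z = a • xvec (m + 1) + b • yvec (m + 1) := by
    intro z
    constructor
    · intro hz
      set Z : ZMod m → ℝ := fun k => z (w m k) with hZdef
      have H0 : ∑ k : ZMod m, Z k = 0 := by
        have := congrFun hz 0
        rw [mulVec_zero_eq] at this
        simpa using this
      have HK : ∀ k : ZMod m, z 0 + (2 * ∑ l : ZMod m, Z l
          - 2 * Z k - 2 * Z (k + 1) - 2 * Z (k - 1)) = 0 := by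
        intro k
        have := congrFun hz (w m k)
        rw [mulVec_w_eq hm] at this
        simpa using this
      have Htrio : ∀ k : ZMod m, z 0 = 2 * Z k + 2 * Z (k + 1) + 2 * Z (k - 1) := by
        intro k
        have hk := HK k
        rw [H0] at hk
        linarith
      have Hper : ∀ k : ZMod m, Z (k + 3) = Z k := by
        intro k
        have h1' := Htrio (k + 1)
        have h2' := Htrio (k + 2)
        rw [add_sub_cancel_right, show k + 1 + 1 = k + 2 by ring] at h1'
        rw [show k + 2 - 1 = k + 1 by ring, show k + 2 + 1 = k + 3 by ring] at h2'
        linarith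
      set f : ℕ → ℝ := fun r => if r = 0 then Z 0 else if r = 1 then Z 1 else Z 2 with hfdef
      have hZval : ∀ k : ZMod m, Z k = f (k.val % 3) := by
        intro k
        have hk := periodic_eval Z Hper k.val
        rw [ZMod.natCast_rightInverse k] at hk
        have hr : k.val % 3 = 0 ∨ k.val % 3 = 1 ∨ k.val % 3 = 2 := by omega
        rcases hr with hr | hr | hr <;> rw [hr] at hk <;> simp [hfdef, hr] <;>
          · rw [hk]; norm_num
      have Hsum : ∑ k : ZMod m, Z k = ((m / 3 : ℕ) : ℝ) * (Z 0 + Z 1 + Z 2) := by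
        rw [sum_zmod]
        have hcong : ∀ v ∈ Finset.range m, Z ((v : ℕ) : ZMod m) = f (v % 3) := by
          intro v _
          rw [hZval, ZMod.val_natCast, Nat.mod_mod_of_dvd _ hdvd]
        rw [Finset.sum_congr rfl hcong]
        have hs := sum_range_mod3 f (m / 3)
        rw [show 3 * (m / 3) = m by omega] at hs
        rw [hs]
        simp [hfdef]
      have habc : Z 0 + Z 1 + Z 2 = 0 := by
        rw [H0] at Hsum
        have hne : ((m / 3 : ℕ) : ℝ) ≠ 0 := Nat.cast_ne_zero.mpr (by omega)
        rcases mul_eq_zero.mp Hsum.symm with hc | hc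
        · exact absurd hc hne
        · exact hc
      have hz0 : z 0 = 0 := by
        have h0' := Htrio 0
        have hZm1 : Z (0 - 1) = Z 2 := by
          have hc : ((m - 1 : ℕ) : ZMod m) = 0 - 1 := by
            rw [Nat.cast_sub (by omega : 1 ≤ m), ZMod.natCast_self, Nat.cast_one]
          rw [← hc, hZval, ZMod.val_natCast, Nat.mod_eq_of_lt (show m - 1 < m by omega),
            show (m - 1) % 3 = 2 by omega]
          norm_num [hfdef]
        rw [zero_add, hZm1] at h0'
        linarith
      refine ⟨Z 0, Z 1, ?_⟩
      funext i
      rcases eq_zero_or_w i with rfl | ⟨k, rfl⟩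
      · rw [hz0, hxy0]
      · rw [show z (w m k) = Z k from rfl, hZval, hxyw]
        have hr : k.val % 3 = 0 ∨ k.val % 3 = 1 ∨ k.val % 3 = 2 := by omega
        rcases hr with hr | hr | hr <;> simp [hfdef, hr] <;> linarith
    · rintro ⟨a, b, rfl⟩
      have hsum : ∑ k : ZMod m, (a • xvec (m + 1) + b • yvec (m + 1)) (w m k) = 0 := by
        rw [sum_zmod (fun k => (a • xvec (m + 1) + b • yvec (m + 1)) (w m k))]
        set f : ℕ → ℝ := fun r => if r = 0 then a else if r = 1 then b else -a - b with hfdef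
        have hcong : ∀ v ∈ Finset.range m,
            (a • xvec (m + 1) + b • yvec (m + 1)) (w m ((v : ℕ) : ZMod m)) = f (v % 3) := by
          intro v _
          rw [hxyw, ZMod.val_natCast, Nat.mod_mod_of_dvd _ hdvd]
        rw [Finset.sum_congr rfl hcong]
        have hs := sum_range_mod3 f (m / 3)
        rw [show 3 * (m / 3) = m by omega] at hs
        rw [hs]
        norm_num [hfdef]
      funext i
      rcases eq_zero_or_w i with rfl | ⟨k, rfl⟩
      · rw [mulVec_zero_eq, hsum]; simp
      · simp only [Pi.zero_apply]
        rw [mulVec_w_eq hm, hxy0, hsum, hxyw, hxyw, hxyw]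
        have e1 := val_add_one_mod3 hm h3 k
        have e2 := val_add_one_mod3 hm h3 (k - 1)
        rw [sub_add_cancel] at e2
        have hr : k.val % 3 = 0 ∨ k.val % 3 = 1 ∨ k.val % 3 = 2 := by omega
        rcases hr with hr | hr | hr
        · rw [hr, show (k + 1).val % 3 = 1 by omega, show (k - 1).val % 3 = 2 by omega]
          simp; ring
        · rw [hr, show (k + 1).val % 3 = 2 by omega, show (k - 1).val % 3 = 0 by omega]
          simp; ring
        · rw [hr, show (k + 1).val % 3 = 0 by omega, show (k - 1).val % 3 = 1 by omega]
          simp; ring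
  refine ⟨?_, key⟩
  have hker : LinearMap.ker (EW (m + 1)).mulVecLin
      = Submodule.span ℝ {xvec (m + 1), yvec (m + 1)} := by
    ext z
    rw [LinearMap.mem_ker, Matrix.mulVecLin_apply, key z, Submodule.mem_span_pair]
    constructor
    · rintro ⟨a, b, rfl⟩; exact ⟨a, b, rfl⟩
    · rintro ⟨a, b, hab⟩; exact ⟨a, b, hab.symm⟩
  have hind : LinearIndependent ℝ ![xvec (m + 1), yvec (m + 1)] := by
    rw [LinearIndependent.pair_iff]
    intro s t hst
    have h1' := congrFun hst ⟨1, by omega⟩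
    have h2' := congrFun hst ⟨2, by omega⟩
    simp [xvec, yvec] at h1' h2'
    exact ⟨h1', h2'⟩
  have hcard : Module.finrank ℝ
      (Submodule.span ℝ ({xvec (m + 1), yvec (m + 1)} : Set (Fin (m + 1) → ℝ))) = 2 := by
    have hfs := finrank_span_eq_card hind
    rw [show Set.range ![xvec (m + 1), yvec (m + 1)]
        = ({xvec (m + 1), yvec (m + 1)} : Set (Fin (m + 1) → ℝ)) by
      rw [Matrix.range_cons, Matrix.range_cons, Matrix.range_empty]
      simp [Set.pair_comm]] at hfs
    simpa using hfs
  have hrn := LinearMap.finrank_range_add_finrank_ker (EW (m + 1)).mulVecLin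
  rw [hker, hcard] at hrn
  have hfr : Module.finrank ℝ (Fin (m + 1) → ℝ) = m + 1 := by simp
  rw [hfr] at hrn
  have hrank : (EW (m + 1)).rank
      = Module.finrank ℝ (LinearMap.range (EW (m + 1)).mulVecLin) := rfl
  rw [hrank]
  omega
end
end

section
/- Let n ≥ 8 with n ≢ 1 (mod 3). Define the n×n matrix L̃ = ((n−1)/3)I_n − (1/3)[[0, e'],[e, 0]] + [[0, 0'],[0, M]], where M = (1/3)circ(x̄') with x̄ = (2−n, 1,−2,1, …, 1,−2,1)' ∈ R^{n-1} if n ≡ 2 (mod 3), and M = (1/3)circ(ȳ') with ȳ = (−n, 2,−1,−1, …, 2,−1,−1, 2)' ∈ R^{n-1} if n ≡ 0 (mod 3). Then with w = (1/6)(7−n, 1, …, 1)' ∈ R^n, the inverse of the eccentricity matrix satisfies E(W_n)^{-1} = −(1/2)L̃ + (6/(n−1))ww'. -/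
open Matrix

noncomputable section

/-- First row of the circulant block of the Laplacian-like matrix, as a function of the
cyclic index: `x̄ = (2-n, 1,-2,1, …, 1,-2,1)` if `n ≡ 2 (mod 3)` and
`ȳ = (-n, 2,-1,-1, …, 2,-1,-1, 2)` if `n ≡ 0 (mod 3)` (without the factor `1/3`). -/
def barv (n : ℕ) : ℕ → ℝ := fun k =>
  if n % 3 = 2 then (if k = 0 then 2 - (n : ℝ) else if k % 3 = 2 then -2 else 1)
  else (if k = 0 then -(n : ℝ) else if k % 3 = 1 then 2 else -1)

/-- The Laplacian-like matrix
`L̃ = ((n-1)/3) I_n - (1/3)[[0,e'],[e,0]] + [[0,0'],[0,M]]`, where `M = (1/3) circ(x̄')`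
if `n ≡ 2 (mod 3)` and `M = (1/3) circ(ȳ')` if `n ≡ 0 (mod 3)`. -/
def Ltilde (n : ℕ) : Matrix (Fin n) (Fin n) ℝ :=
  Matrix.of fun i j =>
    (if i = j then ((n : ℝ) - 1) / 3 else 0)
    - (if ((i : ℕ) = 0 ∧ (j : ℕ) ≠ 0) ∨ ((i : ℕ) ≠ 0 ∧ (j : ℕ) = 0) then 1 / 3 else 0)
    + (if (i : ℕ) ≠ 0 ∧ (j : ℕ) ≠ 0 then
        (1 / 3) * barv n ((((j : ℕ) : ZMod (n - 1)) - ((i : ℕ) : ZMod (n - 1))).val)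
      else 0)

/-! Send the hub to the last index and cycle vertex `i` to `i mod (n - 1)` in `ZMod (n - 1)`.
Both `E(W_n)` and the claimed inverse `B` become bordered circulant matrices. The cycle block of
`E(W_n)` is `2J - 2(P⁻¹ + I + P)`, so it sends a column `h` to `2 ∑ h - 2 (h(a+1) + h(a) + h(a-1))`,
and `E(W_n) B = I` comes down to two facts about the first column `h` of the cycle block of `B`:
its entries sum to zero, and its cyclic windows of three sum to `1/(2(n-1))`, minus `1/2` at the
diagonal. The patterns `x̄` and `ȳ` are `3`-periodic away from index `0`, with vanishing period
sums; as `3 ∤ n - 1` the wrap-around breaks the period only next to index `0`, and there the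
diagonal entry `2 - n` or `-n` compensates. -/

lemma natCast_zmod_injOn (m : ℕ) : Set.InjOn (fun k : ℕ => (k : ZMod m)) (Set.Icc 1 m) := by
  intro i hi j hj hij
  refine ((ZMod.natCast_eq_natCast_iff i j m).mp hij).eq_of_abs_lt ?_
  simp only [Set.mem_Icc] at hi hj
  rw [abs_sub_lt_iff]
  omega

lemma ZMod.one_ne_zero_of_two_le {m : ℕ} (hm : 2 ≤ m) : (1 : ZMod m) ≠ 0 := by
  simpa using (natCast_zmod_injOn m).ne (x := 1) (y := m) (by simp; omega) (by simp; omega)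
    (by omega)

lemma ZMod.two_ne_zero_of_three_le {m : ℕ} (hm : 3 ≤ m) : (2 : ZMod m) ≠ 0 := by
  simpa using (natCast_zmod_injOn m).ne (x := 2) (y := m) (by simp; omega) (by simp; omega)
    (by omega)

lemma ZMod.val_add_one {m : ℕ} [NeZero m] (d : ZMod m) : (d + 1).val = (d.val + 1) % m := by
  rw [ZMod.val_add, ZMod.val_one_eq_one_mod, Nat.add_mod_mod]

lemma ZMod.val_neg_one' {m : ℕ} [NeZero m] (hm : 2 ≤ m) : (-1 : ZMod m).val = m - 1 := by
  rw [ZMod.neg_val', ZMod.val_one_eq_one_mod, Nat.mod_eq_of_lt (by omega : 1 < m),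
    Nat.mod_eq_of_lt (by omega)]

lemma ZMod.val_sub_one {m : ℕ} [NeZero m] (hm : 2 ≤ m) (d : ZMod m) :
    (d - 1).val = (d.val + (m - 1)) % m := by
  rw [sub_eq_add_neg, ZMod.val_add, ZMod.val_neg_one' hm]

lemma barv_add_barv_add_barv_eq_zero (n : ℕ) {t : ℕ} (ht : 1 ≤ t) :
    barv n t + barv n (t + 1) + barv n (t + 2) = 0 := by
  unfold barv
  split_ifs <;> first | contradiction | omega | norm_num

lemma sum_range_three_mul_barv_succ (n q : ℕ) :
    ∑ k ∈ Finset.range (3 * q), barv n (k + 1) = 0 := by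
  induction q with
  | zero => simp
  | succ q ih =>
    rw [show 3 * (q + 1) = 3 * q + 1 + 1 + 1 by ring, Finset.sum_range_succ,
      Finset.sum_range_succ, Finset.sum_range_succ, ih, zero_add, add_assoc,
      ← barv_add_barv_add_barv_eq_zero n (by omega : 1 ≤ 3 * q + 1)]
    ring_nf

lemma sum_range_barv {m : ℕ} (hm : m % 3 ≠ 0) :
    ∑ k ∈ Finset.range m, barv (m + 1) k = 1 - m := by
  obtain ⟨q, rfl | rfl⟩ : ∃ q, m = 3 * q + 1 ∨ m = 3 * q + 2 := ⟨m / 3, by omega⟩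
  · rw [Finset.sum_range_succ', sum_range_three_mul_barv_succ]
    simp [barv, show (3 * q + 1 + 1) % 3 = 2 by omega]
    ring
  · rw [Finset.sum_range_succ, Finset.sum_range_succ', sum_range_three_mul_barv_succ]
    simp [barv, show (3 * q + 2 + 1) % 3 = 0 by omega, show (3 * q + 1) % 3 = 1 by omega]
    ring

lemma barv_triple_nat {m t : ℕ} (hm : m % 3 ≠ 0) (h3 : 3 ≤ m) (ht : t < m) :
    barv (m + 1) ((t + (m - 1)) % m) + barv (m + 1) t + barv (m + 1) ((t + 1) % m) =
      if t = 0 then 3 - (m : ℝ) else if t = 1 ∨ t = m - 1 then -(m : ℝ) else 0 := by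
  have hprev : (t + (m - 1)) % m = if t = 0 then m - 1 else t - 1 := by
    split_ifs with h
    · rw [h, zero_add, Nat.mod_eq_of_lt (by omega)]
    · rw [show t + (m - 1) = t - 1 + m by omega, Nat.add_mod_right, Nat.mod_eq_of_lt (by omega)]
  have hnext : (t + 1) % m = if t = m - 1 then 0 else t + 1 := by
    split_ifs with h
    · rw [show t + 1 = m by omega, Nat.mod_self]
    · exact Nat.mod_eq_of_lt (by omega)
  rw [hprev, hnext]
  unfold barv
  split_ifs <;> first | contradiction | omega | (push_cast; ring)

lemma barv_triple {m : ℕ} [NeZero m] (hm : m % 3 ≠ 0) (h3 : 3 ≤ m) (d : ZMod m) :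
    barv (m + 1) (d - 1).val + barv (m + 1) d.val + barv (m + 1) (d + 1).val =
      if d = 0 then 3 - (m : ℝ) else if d = 1 ∨ d = -1 then -(m : ℝ) else 0 := by
  rw [ZMod.val_sub_one (by omega), ZMod.val_add_one, barv_triple_nat hm h3 (ZMod.val_lt d)]
  simp only [← (ZMod.val_injective m).eq_iff, ZMod.val_zero, ZMod.val_neg_one' (by omega : 2 ≤ m),
    ZMod.val_one_eq_one_mod, Nat.mod_eq_of_lt (by omega : 1 < m)]

lemma barv_neg_triple {m : ℕ} [NeZero m] (hm : m % 3 ≠ 0) (h3 : 3 ≤ m) (d : ZMod m) :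
    barv (m + 1) (-(d + 1)).val + barv (m + 1) (-d).val + barv (m + 1) (-(d - 1)).val =
      if d = 0 then 3 - (m : ℝ) else if d = 1 ∨ d = -1 then -(m : ℝ) else 0 := by
  have h := barv_triple hm h3 (-d)
  rw [show -d - 1 = -(d + 1) by ring, show -d + 1 = -(d - 1) by ring] at h
  simpa only [neg_eq_iff_eq_neg, neg_zero, neg_neg, or_comm] using h

def eccCycle (m : ℕ) : ZMod m → ℝ := fun d => if d = 0 ∨ d = 1 ∨ d = -1 then 0 else 2

lemma eccCycle_sub {m : ℕ} (hm : 3 ≤ m) (a c : ZMod m) :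
    eccCycle m (a - c) =
      2 - 2 * ((if c = a + 1 then 1 else 0) + (if c = a then 1 else 0)
        + (if c = a - 1 then 1 else 0)) := by
  have h1 := ZMod.one_ne_zero_of_two_le (by omega : 2 ≤ m)
  have h2 := ZMod.two_ne_zero_of_three_le hm
  have hsub (k : ZMod m) : a - c = k ↔ c = a - k := by
    constructor <;> intro h <;> linear_combination -h
  have hne : a ≠ a - 1 := fun h => h1 (by linear_combination h)
  have hne' : a + 1 ≠ a - 1 := fun h => h2 (by linear_combination h)
  simp only [eccCycle, hsub, sub_zero, sub_neg_eq_add]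
  by_cases ha : c = a
  · simp [ha, h1, hne]
  by_cases ha1 : c = a - 1
  · simp [ha1, hne.symm, hne'.symm]
  by_cases ha2 : c = a + 1 <;> simp [ha, ha1, ha2, hne', h1]

lemma sum_eccCycle_mul {m : ℕ} [NeZero m] (hm : 3 ≤ m) (h : ZMod m → ℝ) (a : ZMod m) :
    ∑ c, eccCycle m (a - c) * h c = 2 * ∑ c, h c - 2 * (h (a + 1) + h a + h (a - 1)) := by
  simp only [eccCycle_sub hm, sub_mul, mul_add, add_mul, Finset.sum_sub_distrib,
    Finset.sum_add_distrib, ← Finset.mul_sum]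
  simp

def invCycle (m : ℕ) : ZMod m → ℝ := fun d =>
  (if d = 0 then -(m : ℝ) / 6 else 0) - barv (m + 1) (-d).val / 6 + 1 / (6 * m)

lemma sum_invCycle {m : ℕ} [NeZero m] (hm : m % 3 ≠ 0) : ∑ d, invCycle m d = 0 := by
  have hsum : ∑ d : ZMod m, barv (m + 1) d.val = 1 - m := by
    obtain ⟨k, rfl⟩ : ∃ k, m = k + 1 := Nat.exists_eq_add_one.mpr (NeZero.pos m)
    exact (Fin.sum_univ_eq_sum_range (fun i => barv (k + 1 + 1) i) (k + 1)).trans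
      (sum_range_barv hm)
  have hsum_neg : ∑ d : ZMod m, barv (m + 1) (-d).val = 1 - m :=
    (Equiv.sum_comp (Equiv.neg _) (fun d : ZMod m => barv (m + 1) d.val)).trans hsum
  have hm0 : (m : ℝ) ≠ 0 := NeZero.ne _
  simp only [invCycle, Finset.sum_add_distrib, Finset.sum_sub_distrib, ← Finset.sum_div,
    hsum_neg]
  simp [ZMod.card]
  field_simp
  ring

lemma invCycle_triple {m : ℕ} [NeZero m] (hm : m % 3 ≠ 0) (h3 : 3 ≤ m) (d : ZMod m) :
    invCycle m (d + 1) + invCycle m d + invCycle m (d - 1) =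
      1 / (2 * m) - if d = 0 then 1 / 2 else 0 := by
  have h1 := ZMod.one_ne_zero_of_two_le (by omega : 2 ≤ m)
  have h2 := ZMod.two_ne_zero_of_three_le h3
  have hb := barv_neg_triple hm h3 d
  simp only [invCycle]
  by_cases hd0 : d = 0
  · rw [if_pos hd0] at hb
    rw [if_neg (by rw [hd0]; simpa using h1), if_pos hd0, if_neg (by rw [hd0]; simpa using h1),
      if_pos hd0]
    linear_combination (-1 / 6 : ℝ) * hb
  by_cases hd1 : d = 1
  · rw [if_neg hd0, if_pos (Or.inl hd1)] at hb
    rw [if_neg (by rw [hd1]; norm_num; exact h2), if_neg hd0, if_pos (by rw [hd1, sub_self]),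
      if_neg hd0]
    linear_combination (-1 / 6 : ℝ) * hb
  by_cases hdm : d = -1
  · rw [if_neg hd0, if_pos (Or.inr hdm)] at hb
    rw [if_pos (by rw [hdm, neg_add_cancel]), if_neg hd0,
      if_neg (by rw [hdm]; intro h; exact h2 (by linear_combination -h)), if_neg hd0]
    linear_combination (-1 / 6 : ℝ) * hb
  · rw [if_neg hd0, if_neg (by tauto)] at hb
    rw [if_neg (fun h => hdm (eq_neg_of_add_eq_zero_left h)), if_neg hd0,
      if_neg (fun h => hd1 (sub_eq_zero.mp h)), if_neg hd0]
    linear_combination (-1 / 6 : ℝ) * hb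

def eccBlocks (m : ℕ) : Matrix (ZMod m ⊕ Unit) (ZMod m ⊕ Unit) ℝ :=
  fromBlocks (circulant (eccCycle m)) (of fun _ _ => 1) (of fun _ _ => 1) 0

-- `-(1/2) L̃ + (6/m) w w'` for `n = m + 1`, hub last; e.g. the corner is
-- `-(1/2) (m/3) + (6/m) ((6 - m)/6)^2 = 6/m - 2`.
def invBlocks (m : ℕ) : Matrix (ZMod m ⊕ Unit) (ZMod m ⊕ Unit) ℝ :=
  fromBlocks (circulant (invCycle m)) (of fun _ _ => 1 / m) (of fun _ _ => 1 / m)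
    (of fun _ _ => 6 / m - 2)

lemma eccBlocks_mul_invBlocks {m : ℕ} [NeZero m] (hm : m % 3 ≠ 0) (h3 : 3 ≤ m) :
    eccBlocks m * invBlocks m = 1 := by
  have hm0 : (m : ℝ) ≠ 0 := NeZero.ne _
  have hsum_sub (b : ZMod m) : ∑ c, invCycle m (c - b) = 0 :=
    (Equiv.sum_comp (Equiv.subRight b) (invCycle m)).trans (sum_invCycle hm)
  ext (a | _) (b | _)
  all_goals simp only [eccBlocks, invBlocks, mul_apply, Fintype.sum_sum_type, one_apply,
    fromBlocks_apply₁₁, fromBlocks_apply₁₂, fromBlocks_apply₂₁, fromBlocks_apply₂₂, circulant_apply,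
    of_apply, Matrix.zero_apply, Finset.univ_unique, Finset.sum_singleton, Sum.inl.injEq,
    reduceCtorEq]
  · rw [sum_eccCycle_mul h3 (fun c => invCycle m (c - b)), hsum_sub,
      show a + 1 - b = a - b + 1 by ring, show a - 1 - b = a - b - 1 by ring,
      invCycle_triple hm h3]
    simp only [sub_eq_zero]
    split_ifs <;> field_simp <;> ring
  · rw [sum_eccCycle_mul h3 (fun _ => 1 / (m : ℝ))]
    simp [ZMod.card]
    field_simp
    ring
  · simp [hsum_sub]
  · simp [ZMod.card]

def wheelIndex (m : ℕ) : Fin (m + 1) → ZMod m ⊕ Unit :=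
  fun i => if i = 0 then Sum.inr () else Sum.inl ((i : ℕ) : ZMod m)

lemma Fin.natCast_val_zmod_eq_iff_of_ne_zero {m : ℕ} {i j : Fin (m + 1)} (hi : i ≠ 0) (hj : j ≠ 0) :
    ((i : ℕ) : ZMod m) = ((j : ℕ) : ZMod m) ↔ i = j := by
  have hi' : (i : ℕ) ≠ 0 := Fin.val_ne_zero_iff.mpr hi
  have hj' : (j : ℕ) ≠ 0 := Fin.val_ne_zero_iff.mpr hj
  refine ⟨fun h => Fin.ext (natCast_zmod_injOn m ?_ ?_ h), fun h => h ▸ rfl⟩ <;>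
    simp only [Set.mem_Icc] <;> omega

lemma wheelIndex_bijective (m : ℕ) [NeZero m] : Function.Bijective (wheelIndex m) := by
  refine (Fintype.bijective_iff_injective_and_card _).mpr ⟨fun i j h => ?_, by simp [ZMod.card]⟩
  by_cases hi : i = 0 <;> by_cases hj : j = 0 <;> simp [wheelIndex, hi, hj] at h
  · exact hi.trans hj.symm
  · exact (Fin.natCast_val_zmod_eq_iff_of_ne_zero hi hj).mp h

lemma EW_eq_submatrix (m : ℕ) :
    EW (m + 1) = (eccBlocks m).submatrix (wheelIndex m) (wheelIndex m) := by
  ext i j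
  by_cases hi : i = 0 <;> by_cases hj : j = 0
  · simp [EW, eccBlocks, wheelIndex, hi, hj]
  · simp [EW, eccBlocks, wheelIndex, hi, hj, Ne.symm hj]
  · simp [EW, eccBlocks, wheelIndex, hi, hj]
  have hi' : (i : ℕ) ≠ 0 := Fin.val_ne_zero_iff.mpr hi
  have hj' : (j : ℕ) ≠ 0 := Fin.val_ne_zero_iff.mpr hj
  simp only [EW, eccBlocks, wheelIndex, hi, hj, hi', hj', of_apply, submatrix_apply, if_false,
    fromBlocks_apply₁₁, circulant_apply, eccCycle, or_self,
    ← Fin.natCast_val_zmod_eq_iff_of_ne_zero hi hj, ← sub_eq_zero (a := ((i : ℕ) : ZMod m)),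
    ← neg_sub ((i : ℕ) : ZMod m), neg_eq_iff_eq_neg]
  split_ifs <;> tauto

lemma smul_Ltilde_add_eq_submatrix {m : ℕ} [NeZero m] (w : Fin (m + 1) → ℝ)
    (hw : ∀ i, w i = if (i : ℕ) = 0 then (7 - ((m + 1 : ℕ) : ℝ)) / 6 else 1 / 6) :
    (-(1 / 2) : ℝ) • Ltilde (m + 1) + (6 / (((m + 1 : ℕ) : ℝ) - 1)) • of (fun i j => w i * w j) =
      (invBlocks m).submatrix (wheelIndex m) (wheelIndex m) := by
  have hm0 : (m : ℝ) ≠ 0 := NeZero.ne _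
  ext i j
  have hi' : (i : ℕ) = 0 ↔ i = 0 := Fin.val_eq_zero_iff
  have hj' : (j : ℕ) = 0 ↔ j = 0 := Fin.val_eq_zero_iff
  simp only [Ltilde, invBlocks, wheelIndex, hw, hi', hj', Matrix.add_apply, Matrix.smul_apply,
    of_apply, submatrix_apply, smul_eq_mul, Nat.cast_add, Nat.cast_one, add_sub_cancel_right, ne_eq]
  by_cases hi : i = 0 <;> by_cases hj : j = 0
  · simp only [hi, hj, if_true]
    simp
    field_simp
    ring
  · simp [hi, hj, Ne.symm hj]
    field_simp
    ring
  · simp [hi, hj]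
    field_simp
    ring
  · simp only [hi, hj, if_false, if_true, not_false_eq_true, false_and, and_false, and_self,
      or_self, sub_zero, fromBlocks_apply₁₁,
      circulant_apply, invCycle, neg_sub, sub_eq_zero, Fin.natCast_val_zmod_eq_iff_of_ne_zero hi hj]
    split_ifs <;> ring

theorem stmt18 (n : ℕ) (h8 : 8 ≤ n) (h1 : n % 3 ≠ 1)
    (w : Fin n → ℝ) (hw : ∀ i, w i = if (i : ℕ) = 0 then (7 - (n : ℝ)) / 6 else 1 / 6) :
    (EW n)⁻¹ =
      (-(1 / 2) : ℝ) • Ltilde n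
        + (6 / ((n : ℝ) - 1)) • Matrix.of (fun i j => w i * w j) := by
  obtain ⟨m, rfl⟩ : ∃ m, n = m + 1 := ⟨n - 1, by omega⟩
  have : NeZero m := ⟨by omega⟩
  let e := Equiv.ofBijective _ (wheelIndex_bijective m)
  rw [EW_eq_submatrix, smul_Ltilde_add_eq_submatrix w hw]
  exact (inv_submatrix_equiv (eccBlocks m) e e).trans
    (by rw [inv_eq_right_inv (eccBlocks_mul_invBlocks (by omega) (by omega))]; rfl)
end
end

section
/- Let n ≥ 8 with n ≢ 1 (mod 3) and let L̃ be the Laplacian-like matrix defined by L̃ = ((n−1)/3)I_n − (1/3)[[0, e'],[e, 0]] + [[0, 0'],[0, M]] with M as in the inverse formula for E(W_n)^{-1}. Then L̃ is symmetric, L̃e = 0, e'L̃ = 0, and rank(L̃) = n − 1. -/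
open Matrix

noncomputable section

/-! ### Auxiliary lemmas -/


lemma barv_consec (n : ℕ) {a : ℕ} (ha : 1 ≤ a) :
    barv n a + barv n (a + 1) + barv n (a + 2) = 0 := by
  unfold barv
  have h0 : a ≠ 0 := by omega
  have h1 : a + 1 ≠ 0 := by omega
  have h2 : a + 2 ≠ 0 := by omega
  by_cases hn : n % 3 = 2 <;>
    simp only [hn, if_true, if_false, h0, h1, h2, ite_false] <;>
    [skip; skip] <;>
  · have hm : a % 3 = 0 ∨ a % 3 = 1 ∨ a % 3 = 2 := by omega
    rcases hm with h | h | h <;>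
      · have e1 : (a + 1) % 3 = (a % 3 + 1) % 3 := by omega
        have e2 : (a + 2) % 3 = (a % 3 + 2) % 3 := by omega
        rw [e1, e2, h]
        norm_num

lemma barv_symm' (n : ℕ) (h8 : 8 ≤ n) (h1 : n % 3 ≠ 1) {t : ℕ} (h0 : 1 ≤ t)
    (hlt : t < n - 1) : barv n t = barv n (n - 1 - t) := by
  unfold barv
  have ht0 : t ≠ 0 := by omega
  have ht1 : n - 1 - t ≠ 0 := by omega
  by_cases hn : n % 3 = 2 <;>
    simp only [hn, if_true, if_false, ht0, ht1, ite_false]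
  · have : t % 3 = 2 ↔ (n - 1 - t) % 3 = 2 := by omega
    by_cases h : t % 3 = 2
    · rw [if_pos h, if_pos (this.mp h)]
    · rw [if_neg h, if_neg (fun hh => h (this.mpr hh))]
  · have : t % 3 = 1 ↔ (n - 1 - t) % 3 = 1 := by
      have : n % 3 = 0 := by omega
      omega
    by_cases h : t % 3 = 1
    · rw [if_pos h, if_pos (this.mp h)]
    · rw [if_neg h, if_neg (fun hh => h (this.mpr hh))]

lemma barv_block (n : ℕ) {a : ℕ} (ha : 1 ≤ a) (s : ℕ) :
    ∑ t ∈ Finset.range (3 * s), barv n (a + t) = 0 := by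
  induction s with
  | zero => simp
  | succ s ih =>
    rw [show 3 * (s + 1) = 3 * s + 1 + 1 + 1 by ring, Finset.sum_range_succ,
      Finset.sum_range_succ, Finset.sum_range_succ, ih]
    have := barv_consec n (a := a + 3 * s) (by omega)
    rw [show a + 3 * s + 1 = a + (3 * s + 1) by ring,
      show a + 3 * s + 2 = a + (3 * s + 1 + 1) by ring] at this
    linarith

lemma barv_sum (n : ℕ) (h8 : 8 ≤ n) (h1 : n % 3 ≠ 1) :
    ∑ t ∈ Finset.range (n - 1), barv n t = 2 - n := by
  have hsplit : ∑ t ∈ Finset.range (n - 1), barv n t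
      = (∑ t ∈ Finset.range (n - 2), barv n (t + 1)) + barv n 0 := by
    rw [show n - 1 = (n - 2) + 1 by omega, Finset.sum_range_succ']
  rw [hsplit]
  by_cases hn : n % 3 = 2
  · have h2 : n - 2 = 3 * ((n - 2) / 3) := by omega
    have : ∑ t ∈ Finset.range (n - 2), barv n (t + 1)
        = ∑ t ∈ Finset.range (3 * ((n - 2) / 3)), barv n (1 + t) := by
      rw [← h2]
      exact Finset.sum_congr rfl fun t _ => by rw [Nat.add_comm]
    rw [this, barv_block n (by omega)]
    simp [barv, hn]
  · have hn0 : n % 3 = 0 := by omega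
    have h2 : n - 2 = 3 * ((n - 3) / 3) + 1 := by omega
    have : ∑ t ∈ Finset.range (n - 2), barv n (t + 1)
        = (∑ t ∈ Finset.range (3 * ((n - 3) / 3)), barv n (2 + t)) + barv n 1 := by
      rw [h2, Finset.sum_range_succ']
      congr 1
      exact Finset.sum_congr rfl fun t _ => by rw [show t + 1 + 1 = 2 + t by ring]
    rw [this, barv_block n (by omega)]
    have e1 : barv n 1 = 2 := by simp [barv, hn]
    have e0 : barv n 0 = -(n : ℝ) := by simp [barv, hn]
    rw [e1, e0]
    ring

lemma key3 (n : ℕ) (h8 : 8 ≤ n) (h1 : n % 3 ≠ 1) (k : ZMod (n - 1)) :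
    barv n ((k + 1).val) + barv n k.val + barv n ((k - 1).val)
      = (if k = 0 then 3 else 0)
        - ((n : ℝ) - 1) * ((if k = -1 then 1 else 0) + (if k = 0 then 1 else 0)
            + (if k = 1 then 1 else 0)) := by
  haveI : NeZero (n - 1) := ⟨by omega⟩
  haveI : Fact (1 < n - 1) := ⟨by omega⟩
  have hm1 : ((n - 2 : ℕ) : ZMod (n - 1)) = -1 := by
    have h : ((n - 2 : ℕ) : ZMod (n - 1)) + 1 = 0 := by
      calc ((n - 2 : ℕ) : ZMod (n - 1)) + 1 = ((n - 2 + 1 : ℕ) : ZMod (n - 1)) := by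
            push_cast; ring
        _ = 0 := by rw [show n - 2 + 1 = n - 1 by omega, ZMod.natCast_self]
    exact eq_neg_of_add_eq_zero_left h
  have hvlt : k.val < n - 1 := ZMod.val_lt k
  have hv1 : (k + 1).val = (k.val + 1) % (n - 1) := by
    rw [ZMod.val_add, ZMod.val_one]
  have hvm : (k - 1).val = (k.val + (n - 2)) % (n - 1) := by
    rw [sub_eq_add_neg, ← hm1, ZMod.val_add, ZMod.val_cast_of_lt (by omega : n - 2 < n - 1)]
  have hk0 : (k = 0) ↔ (k.val = 0) := (ZMod.val_eq_zero k).symm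
  have hk1 : (k = 1) ↔ (k.val = 1) := by
    constructor
    · rintro rfl; exact ZMod.val_one _
    · intro h; apply (ZMod.val_injective (n - 1)); rw [h, ZMod.val_one]
  have hkm : (k = -1) ↔ (k.val = n - 2) := by
    rw [← hm1]
    constructor
    · rintro rfl; exact ZMod.val_cast_of_lt (by omega)
    · intro h; apply (ZMod.val_injective (n - 1))
      rw [h, ZMod.val_cast_of_lt (by omega)]
  rw [hv1, hvm]
  simp only [hk0, hk1, hkm]
  set t := k.val with ht
  by_cases h0 : t = 0
  · rw [h0, show (0 + 1) % (n - 1) = 1 by rw [Nat.zero_add, Nat.mod_eq_of_lt (by omega)],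
      show (0 + (n - 2)) % (n - 1) = n - 2 by rw [Nat.zero_add, Nat.mod_eq_of_lt (by omega)],
      if_pos rfl, if_pos rfl, if_neg (by omega : ¬(0 : ℕ) = n - 2),
      if_neg (by omega : ¬(0 : ℕ) = 1)]
    by_cases hn : n % 3 = 2
    · simp [barv, hn, show n - 2 ≠ 0 by omega, show (n - 2) % 3 = 0 by omega]
      ring
    · simp [barv, hn, show n - 2 ≠ 0 by omega, show (n - 2) % 3 = 1 by omega]
      ring
  · by_cases h1' : t = 1
    · rw [h1', show (1 + 1) % (n - 1) = 2 by rw [Nat.mod_eq_of_lt (by omega)],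
        show (1 + (n - 2)) % (n - 1) = 0 by rw [show 1 + (n - 2) = n - 1 by omega, Nat.mod_self],
        if_neg (by omega : ¬(1 : ℕ) = 0), if_neg (by omega : ¬(1 : ℕ) = n - 2),
        if_pos rfl]
      by_cases hn : n % 3 = 2
      · simp [barv, hn]
        ring
      · simp [barv, hn]
        ring
    · by_cases hm' : t = n - 2
      · rw [hm', show (n - 2 + 1) % (n - 1) = 0 by rw [show n - 2 + 1 = n - 1 by omega, Nat.mod_self],
          show (n - 2 + (n - 2)) % (n - 1) = n - 3 by rw [show n - 2 + (n - 2) = (n - 1) + (n - 3) by omega, Nat.add_mod_left, Nat.mod_eq_of_lt (by omega)],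
          if_neg (by omega : ¬(n - 2 : ℕ) = 0), if_pos rfl,
          if_neg (by omega : ¬(n - 2 : ℕ) = 1)]
        by_cases hn : n % 3 = 2
        · simp [barv, hn, show n - 2 ≠ 0 by omega, show n - 3 ≠ 0 by omega,
            show (n - 2) % 3 = 0 by omega, show (n - 3) % 3 = 2 by omega]
          ring
        · simp [barv, hn, show n - 2 ≠ 0 by omega, show n - 3 ≠ 0 by omega,
            show (n - 2) % 3 = 1 by omega, show (n - 3) % 3 = 0 by omega]
          ring
      · have h2 : 2 ≤ t := by omega
        have h3 : t ≤ n - 3 := by omega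
        rw [show (t + 1) % (n - 1) = t + 1 by rw [Nat.mod_eq_of_lt (by omega)],
          show (t + (n - 2)) % (n - 1) = t - 1 by rw [show t + (n - 2) = (n - 1) + (t - 1) by omega, Nat.add_mod_left, Nat.mod_eq_of_lt (by omega)],
          if_neg h0, if_neg hm', if_neg h1']
        have hc := barv_consec n (a := t - 1) (by omega)
        rw [show t - 1 + 1 = t by omega, show t - 1 + 2 = t + 1 by omega] at hc
        simp only [if_neg h0]
        linarith

def idx (n : ℕ) [NeZero n] (k : ZMod (n - 1)) : Fin n :=
  if h : 2 ≤ n then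
    (if k.val = 0 then ⟨n - 1, by omega⟩
     else ⟨k.val, by
        haveI : NeZero (n - 1) := ⟨by omega⟩
        exact lt_of_lt_of_le (ZMod.val_lt k) (by omega)⟩)
  else 0

lemma idx_ne (n : ℕ) [NeZero n] (h : 2 ≤ n) (k : ZMod (n - 1)) :
    ((idx n k : Fin n) : ℕ) ≠ 0 := by
  unfold idx
  rw [dif_pos h]
  by_cases h0 : k.val = 0
  · rw [if_pos h0]; simp; omega
  · rw [if_neg h0]; simpa using h0

lemma cyc_idx (n : ℕ) [NeZero n] (h : 2 ≤ n) (k : ZMod (n - 1)) :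
    (((idx n k : Fin n) : ℕ) : ZMod (n - 1)) = k := by
  haveI : NeZero (n - 1) := ⟨by omega⟩
  unfold idx
  rw [dif_pos h]
  by_cases h0 : k.val = 0
  · rw [if_pos h0]
    simp only
    rw [ZMod.natCast_self]
    exact ((ZMod.val_eq_zero k).mp h0).symm
  · rw [if_neg h0]
    simp only
    exact ZMod.natCast_rightInverse k

lemma idx_cyc (n : ℕ) [NeZero n] (h : 2 ≤ n) (j : Fin n) (hj : (j : ℕ) ≠ 0) :
    idx n (((j : ℕ) : ZMod (n - 1))) = j := by
  haveI : NeZero (n - 1) := ⟨by omega⟩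
  unfold idx
  rw [dif_pos h]
  have hjlt : (j : ℕ) < n := j.isLt
  by_cases hcase : (j : ℕ) = n - 1
  · rw [if_pos]
    · exact Fin.ext (by simp [hcase])
    · rw [hcase, ZMod.natCast_self, ZMod.val_zero]
  · have hlt : (j : ℕ) < n - 1 := by omega
    rw [if_neg]
    · exact Fin.ext (by simp [ZMod.val_cast_of_lt hlt])
    · rw [ZMod.val_cast_of_lt hlt]; exact hj

lemma barv_val_symm (n : ℕ) (h8 : 8 ≤ n) (h1 : n % 3 ≠ 1) (k : ZMod (n - 1)) :
    barv n ((-k).val) = barv n (k.val) := by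
  haveI : NeZero (n - 1) := ⟨by omega⟩
  by_cases h0 : k = 0
  · rw [h0, neg_zero]
  · have hv0 : k.val ≠ 0 := fun h => h0 ((ZMod.val_eq_zero k).mp h)
    have hvlt : k.val < n - 1 := ZMod.val_lt k
    have hneg : (-k).val = n - 1 - k.val := by
      have hcast : ((n - 1 - k.val : ℕ) : ZMod (n - 1)) = -k := by
        have : ((n - 1 - k.val : ℕ) : ZMod (n - 1)) + ((k.val : ℕ) : ZMod (n - 1)) = 0 := by
          rw [← Nat.cast_add, show n - 1 - k.val + k.val = n - 1 by omega, ZMod.natCast_self]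
        rw [ZMod.natCast_rightInverse k] at this
        linear_combination this
      rw [← hcast, ZMod.val_cast_of_lt (by omega)]
    rw [hneg, barv_symm' n h8 h1 (by omega) hvlt]

lemma sum_reindex (n : ℕ) [NeZero n] (h8 : 8 ≤ n) (i : Fin n) (f : ℕ → ℝ) :
    ∑ j : Fin n, (if (j : ℕ) ≠ 0 then f ((((j : ℕ) : ZMod (n - 1)) - ((i : ℕ) : ZMod (n - 1))).val) else 0)
      = ∑ t ∈ Finset.range (n - 1), f t := by
  haveI : NeZero (n - 1) := ⟨by omega⟩
  rw [← Finset.sum_filter]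
  refine Finset.sum_nbij' (i := fun j => (((j : ℕ) : ZMod (n - 1)) - ((i : ℕ) : ZMod (n - 1))).val)
    (j := fun t => idx n ((t : ZMod (n - 1)) + ((i : ℕ) : ZMod (n - 1)))) ?_ ?_ ?_ ?_ ?_
  · intro j hj
    exact Finset.mem_range.mpr (ZMod.val_lt _)
  · intro t ht
    simp only [Finset.mem_filter, Finset.mem_univ, true_and]
    exact idx_ne n (by omega) _
  · intro j hj
    simp only [Finset.mem_filter, Finset.mem_univ, true_and] at hj
    rw [ZMod.natCast_rightInverse _, sub_add_cancel]
    exact idx_cyc n (by omega) j hj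
  · intro t ht
    rw [cyc_idx n (by omega), add_sub_cancel_right, ZMod.val_cast_of_lt (Finset.mem_range.mp ht)]
  · intro j hj
    rfl

lemma Ltilde_col0 (n : ℕ) (r j : Fin n) (hr : (r : ℕ) ≠ 0) (hj : (j : ℕ) = 0) :
    Ltilde n r j = -(1 / 3) := by
  simp only [Ltilde, Matrix.of_apply]
  rw [if_neg (fun h : r = j => hr (by rw [h]; exact hj)),
    if_pos (Or.inr ⟨hr, hj⟩),
    if_neg (show ¬((r : ℕ) ≠ 0 ∧ (j : ℕ) ≠ 0) from fun h => h.2 hj)]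
  norm_num

lemma Ltilde_entry (n : ℕ) [NeZero n] (hn : 2 ≤ n) (r j : Fin n) (hr : (r : ℕ) ≠ 0)
    (hj : (j : ℕ) ≠ 0) :
    Ltilde n r j
      = (if ((j : ℕ) : ZMod (n - 1)) = ((r : ℕ) : ZMod (n - 1)) then ((n : ℝ) - 1) / 3 else 0)
        + (1 / 3) * barv n ((((j : ℕ) : ZMod (n - 1)) - ((r : ℕ) : ZMod (n - 1))).val) := by
  simp only [Ltilde, Matrix.of_apply]
  have hcond : (r = j) = (((j : ℕ) : ZMod (n - 1)) = ((r : ℕ) : ZMod (n - 1))) := by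
    apply propext
    constructor
    · intro h; rw [h]
    · intro h
      rw [← idx_cyc n hn r hr, ← idx_cyc n hn j hj, h]
  simp only [hcond]
  rw [if_neg (show ¬(((r : ℕ) = 0 ∧ (j : ℕ) ≠ 0) ∨ ((r : ℕ) ≠ 0 ∧ (j : ℕ) = 0)) from
      fun h => h.elim (fun h' => hr h'.1) (fun h' => hj h'.2)),
    if_pos (show (r : ℕ) ≠ 0 ∧ (j : ℕ) ≠ 0 from ⟨hr, hj⟩)]
  ring

theorem stmt19 (n : ℕ) (h8 : 8 ≤ n) (h1 : n % 3 ≠ 1) :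
    (Ltilde n).IsSymm ∧
      (Ltilde n).mulVec (fun _ => 1) = 0 ∧
      Matrix.vecMul (fun _ => 1) (Ltilde n) = 0 ∧
      (Ltilde n).rank = n - 1 := by
  haveI : NeZero n := ⟨by omega⟩
  haveI : NeZero (n - 1) := ⟨by omega⟩
  have hfin0 : ∀ j : Fin n, ((j : ℕ) = 0) ↔ j = 0 := fun j => by
    constructor
    · intro h; exact Fin.ext (by simp [h])
    · intro h; rw [h]; simp
  -- symmetry
  have hsymm : (Ltilde n).IsSymm := by
    rw [Matrix.IsSymm]
    ext i j
    rw [Matrix.transpose_apply]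
    simp only [Ltilde, Matrix.of_apply]
    congr 1
    · congr 1
      · exact if_congr eq_comm rfl rfl
      · exact if_congr (by tauto) rfl rfl
    · by_cases hij : (j : ℕ) ≠ 0 ∧ (i : ℕ) ≠ 0
      · rw [if_pos hij, if_pos (And.intro hij.2 hij.1)]
        congr 1
        rw [show ((i : ℕ) : ZMod (n - 1)) - ((j : ℕ) : ZMod (n - 1))
            = -(((j : ℕ) : ZMod (n - 1)) - ((i : ℕ) : ZMod (n - 1))) by ring,
          barv_val_symm n h8 h1]
      · rw [if_neg hij, if_neg (fun h => hij ⟨h.2, h.1⟩)]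
  -- row sums
  have hrowsum : ∀ i : Fin n, ∑ j, Ltilde n i j = 0 := by
    intro i
    simp only [Ltilde, Matrix.of_apply]
    rw [Finset.sum_add_distrib, Finset.sum_sub_distrib]
    have hS1 : ∑ j : Fin n, (if i = j then ((n : ℝ) - 1) / 3 else 0) = ((n : ℝ) - 1) / 3 := by
      rw [Finset.sum_ite_eq]
      simp
    have hS2 : ∀ (c : Prop) [Decidable c], True := fun _ => trivial
    by_cases hi : (i : ℕ) = 0
    · have hS3 : ∑ j : Fin n, (if (i : ℕ) ≠ 0 ∧ (j : ℕ) ≠ 0 then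
          (1 / 3) * barv n ((((j : ℕ) : ZMod (n - 1)) - ((i : ℕ) : ZMod (n - 1))).val)
          else 0) = 0 :=
        Finset.sum_eq_zero fun j _ => if_neg (fun h => h.1 hi)
      have hS2' : ∑ j : Fin n, (if ((i : ℕ) = 0 ∧ (j : ℕ) ≠ 0) ∨ ((i : ℕ) ≠ 0 ∧ (j : ℕ) = 0)
          then (1 / 3 : ℝ) else 0) = ((n : ℝ) - 1) / 3 := by
        have hterm : ∀ j : Fin n, (if ((i : ℕ) = 0 ∧ (j : ℕ) ≠ 0) ∨ ((i : ℕ) ≠ 0 ∧ (j : ℕ) = 0)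
            then (1 / 3 : ℝ) else 0) = 1 / 3 - (if j = 0 then (1 / 3 : ℝ) else 0) := by
          intro j
          by_cases hj : (j : ℕ) = 0
          · rw [if_neg (by tauto), if_pos ((hfin0 j).mp hj)]; ring
          · rw [if_pos (Or.inl ⟨hi, hj⟩), if_neg (fun h => hj (by rw [h]; simp))]; ring
        rw [Finset.sum_congr rfl fun j _ => hterm j, Finset.sum_sub_distrib,
          Finset.sum_const, Finset.card_univ, Fintype.card_fin, Finset.sum_ite_eq']
        simp only [Finset.mem_univ, if_true, nsmul_eq_mul]
        have : (8 : ℝ) ≤ (n : ℝ) := by exact_mod_cast h8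
        field_simp
      rw [hS1, hS2', hS3]
      ring
    · have hS2' : ∑ j : Fin n, (if ((i : ℕ) = 0 ∧ (j : ℕ) ≠ 0) ∨ ((i : ℕ) ≠ 0 ∧ (j : ℕ) = 0)
          then (1 / 3 : ℝ) else 0) = 1 / 3 := by
        have hterm : ∀ j : Fin n, (if ((i : ℕ) = 0 ∧ (j : ℕ) ≠ 0) ∨ ((i : ℕ) ≠ 0 ∧ (j : ℕ) = 0)
            then (1 / 3 : ℝ) else 0) = (if j = 0 then (1 / 3 : ℝ) else 0) := by
          intro j
          by_cases hj : (j : ℕ) = 0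
          · rw [if_pos (Or.inr ⟨hi, hj⟩), if_pos ((hfin0 j).mp hj)]
          · rw [if_neg (by tauto), if_neg (fun h => hj (by rw [h]; simp))]
        rw [Finset.sum_congr rfl fun j _ => hterm j, Finset.sum_ite_eq']
        simp
      have hS3 : ∑ j : Fin n, (if (i : ℕ) ≠ 0 ∧ (j : ℕ) ≠ 0 then
          (1 / 3) * barv n ((((j : ℕ) : ZMod (n - 1)) - ((i : ℕ) : ZMod (n - 1))).val)
          else 0) = (1 / 3) * (2 - (n : ℝ)) := by
        have hterm : ∀ j : Fin n, (if (i : ℕ) ≠ 0 ∧ (j : ℕ) ≠ 0 then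
            (1 / 3) * barv n ((((j : ℕ) : ZMod (n - 1)) - ((i : ℕ) : ZMod (n - 1))).val)
            else 0) = (1 / 3) * (if (j : ℕ) ≠ 0 then
              barv n ((((j : ℕ) : ZMod (n - 1)) - ((i : ℕ) : ZMod (n - 1))).val) else 0) := by
          intro j
          by_cases hj : (j : ℕ) = 0
          · rw [if_neg (fun h => h.2 hj), if_neg (fun h => h hj)]; ring
          · rw [if_pos ⟨hi, hj⟩, if_pos hj]
        rw [Finset.sum_congr rfl fun j _ => hterm j, ← Finset.mul_sum,
          sum_reindex n h8 i (barv n), barv_sum n h8 h1]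
      rw [hS1, hS2', hS3]
      ring
  have hmul : (Ltilde n).mulVec (fun _ => 1) = 0 := by
    funext i
    have : (Ltilde n).mulVec (fun _ => 1) i = ∑ j, Ltilde n i j := by
      simp [Matrix.mulVec, dotProduct]
    rw [this, hrowsum i]
    simp
  have hvec : Matrix.vecMul (fun _ => (1:ℝ)) (Ltilde n) = 0 := by
    conv_lhs => rw [← hsymm]
    rw [Matrix.vecMul_transpose, hmul]
  refine ⟨hsymm, hmul, hvec, ?_⟩
  -- the kernel of `Ltilde n` is spanned by the all-ones vector
  have hker : LinearMap.ker (Ltilde n).mulVecLin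
      = Submodule.span ℝ {(fun _ => (1 : ℝ) : Fin n → ℝ)} := by
    apply le_antisymm
    · intro v hv
      rw [LinearMap.mem_ker, Matrix.mulVecLin_apply] at hv
      have hrow : ∀ i' : Fin n, ∑ j, Ltilde n i' j * v j = 0 := by
        intro i'
        have h := congrFun hv i'
        simpa [Matrix.mulVec, dotProduct] using h
      have hconst : ∀ i : Fin n, v i = v 0 := by
        intro i
        by_cases hi : (i : ℕ) = 0
        · rw [(hfin0 i).mp hi]
        · set k : ZMod (n - 1) := ((i : ℕ) : ZMod (n - 1)) with hk
          set a : Fin n := idx n (k - 1) with hadef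
          set b : Fin n := idx n (k + 1) with hbdef
          have hca : ((a : ℕ) : ZMod (n - 1)) = k - 1 := cyc_idx n (by omega) _
          have hcb : ((b : ℕ) : ZMod (n - 1)) = k + 1 := cyc_idx n (by omega) _
          have hane : (a : ℕ) ≠ 0 := idx_ne n (by omega) _
          have hbne : (b : ℕ) ≠ 0 := idx_ne n (by omega) _
          -- distinctness of small residues
          have hdist : ∀ c d : ℕ, c < n - 1 → d < n - 1 → c ≠ d →
              ((c : ZMod (n - 1)) ≠ (d : ZMod (n - 1))) := by
            intro c d hc hd hcd heq
            exact hcd (by rw [← ZMod.val_cast_of_lt hc, ← ZMod.val_cast_of_lt hd, heq])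
          haveI : Fact (1 < n - 1) := ⟨by omega⟩
          have hvm1 : (-1 : ZMod (n - 1)).val = n - 2 := by
            have hm1 : ((n - 2 : ℕ) : ZMod (n - 1)) = -1 := by
              have h : ((n - 2 : ℕ) : ZMod (n - 1)) + 1 = 0 := by
                calc ((n - 2 : ℕ) : ZMod (n - 1)) + 1
                    = ((n - 2 + 1 : ℕ) : ZMod (n - 1)) := by push_cast; ring
                  _ = 0 := by rw [show n - 2 + 1 = n - 1 by omega, ZMod.natCast_self]
              exact eq_neg_of_add_eq_zero_left h
            rw [← hm1, ZMod.val_cast_of_lt (by omega)]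
          have hne01 : (0 : ZMod (n - 1)) ≠ 1 := by
            intro h
            have := congrArg ZMod.val h
            rw [ZMod.val_zero, ZMod.val_one] at this
            omega
          have hne0m : (0 : ZMod (n - 1)) ≠ -1 := by
            intro h
            have := congrArg ZMod.val h
            rw [ZMod.val_zero, hvm1] at this
            omega
          have hne1m : (1 : ZMod (n - 1)) ≠ -1 := by
            intro h
            have := congrArg ZMod.val h
            rw [ZMod.val_one, hvm1] at this
            omega
          have coeff : ∀ j : Fin n, Ltilde n a j + Ltilde n i j + Ltilde n b j
              = (if j = i then (1 : ℝ) else 0) - (if j = 0 then 1 else 0) := by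
            intro j
            by_cases hj : (j : ℕ) = 0
            · rw [Ltilde_col0 n a j hane hj, Ltilde_col0 n i j hi hj,
                Ltilde_col0 n b j hbne hj,
                if_neg (fun h : j = i => hi (by rw [← h]; exact hj)),
                if_pos ((hfin0 j).mp hj)]
              norm_num
            · -- j ≠ 0
              rw [Ltilde_entry n (by omega) a j hane hj, Ltilde_entry n (by omega) i j hi hj,
                Ltilde_entry n (by omega) b j hbne hj, hca, hcb, ← hk]
              set kj : ZMod (n - 1) := ((j : ℕ) : ZMod (n - 1)) with hkj
              set κ : ZMod (n - 1) := kj - k with hκ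
              have hji : idx n kj = j := idx_cyc n (by omega) j hj
              have hii : idx n k = i := idx_cyc n (by omega) i hi
              have hJI : (j = i) = (kj = k) := by
                apply propext
                constructor
                · intro h; rw [hkj, hk, h]
                · intro h; rw [← hji, ← hii, h]
              simp only [hJI]
              rw [if_neg (fun h : j = 0 => hj ((hfin0 j).mpr h)),
                show kj - (k - 1) = κ + 1 by rw [hκ]; ring,
                show kj - (k + 1) = κ - 1 by rw [hκ]; ring]
              have hkjk : kj = k + κ := by rw [hκ]; ring
              have hkey := key3 n h8 h1 κ
              by_cases hc0 : κ = 0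
              · have e1 : kj ≠ k - 1 := fun h => by
                  have hm : κ = -1 := by rw [hκ, h]; ring
                  exact hne0m (hc0 ▸ hm)
                have e2 : kj = k := by rw [hkjk, hc0]; ring
                have e3 : kj ≠ k + 1 := fun h => by
                  have hm : κ = 1 := by rw [hκ, h]; ring
                  exact hne01 (hc0 ▸ hm)
                rw [if_neg e1, if_pos e2, if_neg e3, if_pos e2]
                rw [if_pos hc0, if_pos hc0,
                  if_neg (show ¬(κ = -1) from fun h => hne0m (hc0 ▸ h)),
                  if_neg (show ¬(κ = 1) from fun h => hne01 (hc0 ▸ h))] at hkey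
                linarith
              · by_cases hc1 : κ = 1
                · have e1 : kj ≠ k - 1 := fun h => by
                    have hm : κ = -1 := by rw [hκ, h]; ring
                    exact hne1m (hc1 ▸ hm)
                  have e2 : kj ≠ k := fun h => hc0 (by rw [hκ, h]; ring)
                  have e3 : kj = k + 1 := by rw [hkjk, hc1]
                  rw [if_neg e1, if_neg e2, if_pos e3, if_neg e2]
                  rw [if_neg hc0, if_neg hc0, if_pos hc1,
                    if_neg (show ¬(κ = -1) from fun h => hne1m (hc1 ▸ h))] at hkey
                  linarith
                · by_cases hcm : κ = -1
                  · have e1 : kj = k - 1 := by rw [hkjk, hcm]; ring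
                    have e2 : kj ≠ k := fun h => hc0 (by rw [hκ, h]; ring)
                    have e3 : kj ≠ k + 1 := fun h => by
                      have hm : κ = 1 := by rw [hκ, h]; ring
                      exact hne1m (hm ▸ hcm)
                    rw [if_pos e1, if_neg e2, if_neg e3, if_neg e2]
                    rw [if_neg hc0, if_neg hc0, if_pos hcm,
                      if_neg (show ¬(κ = 1) from fun h : κ = 1 => hne1m (h ▸ hcm))] at hkey
                    linarith
                  · have e1 : kj ≠ k - 1 := fun h => hcm (by rw [hκ, h]; ring)
                    have e2 : kj ≠ k := fun h => hc0 (by rw [hκ, h]; ring)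
                    have e3 : kj ≠ k + 1 := fun h => hc1 (by rw [hκ, h]; ring)
                    rw [if_neg e1, if_neg e2, if_neg e3, if_neg e2]
                    rw [if_neg hc0, if_neg hc0, if_neg hc1, if_neg hcm] at hkey
                    linarith
          -- combine the three rows
          have hsum : ∑ j, (Ltilde n a j + Ltilde n i j + Ltilde n b j) * v j = 0 := by
            simp only [add_mul]
            rw [Finset.sum_add_distrib, Finset.sum_add_distrib, hrow a, hrow i, hrow b]
            ring
          rw [Finset.sum_congr rfl (fun j _ => by rw [coeff j])] at hsum
          simp only [sub_mul, ite_mul, one_mul, zero_mul] at hsum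
          rw [Finset.sum_sub_distrib, Finset.sum_ite_eq', Finset.sum_ite_eq'] at hsum
          simp only [Finset.mem_univ, if_true] at hsum
          linarith
      exact Submodule.mem_span_singleton.mpr ⟨v 0, by funext j; simp [hconst j]⟩
    · rw [Submodule.span_le, Set.singleton_subset_iff, SetLike.mem_coe,
        LinearMap.mem_ker, Matrix.mulVecLin_apply, hmul]
  have hrn := LinearMap.finrank_range_add_finrank_ker (Ltilde n).mulVecLin
  rw [hker, finrank_span_singleton (by
      intro h
      have := congrFun h 0
      simp at this)] at hrn
  rw [Module.finrank_fintype_fun_eq_card, Fintype.card_fin] at hrn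
  rw [Matrix.rank]
  omega
end
end
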